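/- arXiv:1310.3546 — 4 statements merged into one kernel-verified Lean document; each statement's English description precedes it below -/
import Mathlib

section
/- The elliptic fake degree of the sign character of S_n equals (1-q)^n / (1 - q^n); that is, ((q-1)^{n-1}/n!) Σ_{w∈S_n} sgn(w)·det_E(1-w)/det_E(1-qw) = (1-q)^n/(1-q^n). -/
set_option maxHeartbeats 1000000
set_option synthInstance.maxHeartbeats 400000

/-!
STATEMENT 3: setup as in the other S_n files: E is the standard reflection
representation of S_n over K = ℚ(q).  The statement asserts that the elliptic fake
degree of the sign character equals (1-q)^n/(1-q^n).
-/

open scoped BigOperators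

noncomputable section

/-- The field `ℚ(q)` of rational functions. -/
abbrev K : Type := RatFunc ℚ

/-- The sum-of-coordinates linear functional on `K^n`. -/
def sumCoords (n : ℕ) : (Fin n → K) →ₗ[K] K :=
  ∑ i : Fin n, LinearMap.proj i

/-- The standard (reflection) representation `E = {x ∈ K^n : Σ x_i = 0}` of `S_n`. -/
def Esub (n : ℕ) : Submodule K (Fin n → K) := LinearMap.ker (sumCoords n)

/-- The permutation action of `w ∈ S_n` on `K^n`. -/
def permL (n : ℕ) (w : Equiv.Perm (Fin n)) : (Fin n → K) →ₗ[K] (Fin n → K) :=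
  LinearMap.funLeft K K w

lemma permL_mem (n : ℕ) (w : Equiv.Perm (Fin n)) (x : Fin n → K) (hx : x ∈ Esub n) :
    permL n w x ∈ Esub n := by
  simp only [Esub, LinearMap.mem_ker, sumCoords, LinearMap.sum_apply, LinearMap.proj_apply,
    permL, LinearMap.funLeft_apply] at hx ⊢
  rw [← hx]
  exact Fintype.sum_equiv w _ _ (fun i => rfl)

/-- The action of `w` restricted to the reflection representation `E`. -/
def permE (n : ℕ) (w : Equiv.Perm (Fin n)) : Esub n →ₗ[K] Esub n :=
  (permL n w).restrict (fun x hx => permL_mem n w x hx)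

/-- `det_E(1 - q w)`. -/
def detE (n : ℕ) (q : K) (w : Equiv.Perm (Fin n)) : K :=
  LinearMap.det ((LinearMap.id : Esub n →ₗ[K] Esub n) - q • permE n w)

/-- The sign character of `S_n`, valued in `K = ℚ(q)`. -/
def sgnChar (n : ℕ) : Equiv.Perm (Fin n) → K := fun w => ((Equiv.Perm.sign w : ℤ) : K)

/-!
If `det_E(1 - w) ≠ 0` then `w` fixes no nonzero vector of `E`, so all of `Fin n` is one
`w`-cycle and `w` is conjugate to the rotation `c = finRotate n`. The summand is a class
function, so the sum is `(n-1)!` times its value at `c`. On `E`, `c` is killed by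
`1 + X + ⋯ + X^{n-1}` and by no polynomial of smaller degree, so this is its characteristic
polynomial, and `det_E(1 - t c) = 1 + t + ⋯ + t^{n-1}` (a palindrome): `n` at `t = 1` and
`(1 - q^n)/(1 - q)` at `t = q`.
-/

open Polynomial Equiv
open scoped Finset

lemma mem_Esub_iff {n : ℕ} (x : Fin n → K) : x ∈ Esub n ↔ ∑ i, x i = 0 := by
  simp [Esub, sumCoords]

@[simp]
lemma permE_apply {n : ℕ} (w : Perm (Fin n)) (x : Esub n) (j : Fin n) :
    (permE n w x : Fin n → K) j = (x : Fin n → K) (w j) := rfl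

lemma permE_mul {n : ℕ} (a b : Perm (Fin n)) : permE n (a * b) = permE n b ∘ₗ permE n a := rfl

lemma permE_one {n : ℕ} : permE n 1 = LinearMap.id := rfl

lemma permE_pow_apply {n : ℕ} (w : Perm (Fin n)) (k : ℕ) (x : Esub n) (j : Fin n) :
    ((permE n w ^ k) x : Fin n → K) j = (x : Fin n → K) ((w ^ k) j) := by
  induction k generalizing j with
  | zero => rfl
  | succ k ih => rw [pow_succ', Module.End.mul_apply, permE_apply, ih, pow_succ, Perm.mul_apply]

lemma finrank_Esub (m : ℕ) : Module.finrank K (Esub (m + 1)) = m := by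
  have hsurj : Function.Surjective (sumCoords (m + 1)) := fun c =>
    ⟨Pi.single 0 c, by simp [sumCoords]⟩
  have h := LinearMap.finrank_range_add_finrank_ker (sumCoords (m + 1))
  rw [LinearMap.range_eq_top.2 hsurj, finrank_top, Module.finrank_self, Module.finrank_fin_fun] at h
  change 1 + Module.finrank K (Esub (m + 1)) = m + 1 at h
  omega

lemma detE_conj {n : ℕ} (t : K) (c w : Perm (Fin n)) : detE n t (c * w * c⁻¹) = detE n t w := by
  have hconj : LinearMap.id - t • permE n (c * w * c⁻¹)
      = permE n c⁻¹ ∘ₗ (LinearMap.id - t • permE n w) ∘ₗ permE n c := by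
    ext x j
    simp [Perm.mul_apply]
  have hinv : LinearMap.det (permE n c) * LinearMap.det (permE n c⁻¹) = 1 := by
    rw [← LinearMap.det_comp, ← permE_mul, inv_mul_cancel, permE_one, LinearMap.det_id]
  unfold detE
  rw [hconj, LinearMap.det_comp, LinearMap.det_comp]
  linear_combination LinearMap.det (LinearMap.id - t • permE n w) * hinv

lemma detE_eq_of_isConj {n : ℕ} (t : K) {v w : Perm (Fin n)} (h : IsConj v w) :
    detE n t v = detE n t w := by
  obtain ⟨c, rfl⟩ := isConj_iff.1 h
  exact (detE_conj t c v).symm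

lemma sgnChar_eq_of_isConj {n : ℕ} {v w : Perm (Fin n)} (h : IsConj v w) :
    sgnChar n v = sgnChar n w := by
  obtain ⟨c, rfl⟩ := isConj_iff.1 h
  rw [sgnChar, sgnChar, map_mul, map_mul, map_inv, mul_right_comm, mul_inv_cancel, one_mul]

lemma detE_one_eq_zero_of_not_sameCycle {n : ℕ} {w : Perm (Fin n)} {a b : Fin n}
    (hab : ¬ w.SameCycle a b) : detE n 1 w = 0 := by
  classical
  set C := (Finset.univ.filter fun j => w.SameCycle a j).card
  -- `n • 1_{cycle of a} - |cycle of a| • 1` is a nonzero `w`-invariant vector of `E`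
  set v : Fin n → K := fun j => (if w.SameCycle a j then (n : K) else 0) - C
  have hv : v ∈ Esub n := by
    rw [mem_Esub_iff, Finset.sum_sub_distrib, ← Finset.sum_filter]
    simp [C, mul_comm]
  have hfix : permE n w ⟨v, hv⟩ = ⟨v, hv⟩ := by
    ext j
    simp [v, Perm.sameCycle_apply_right]
  have hC : C < n := by
    refine (Finset.card_lt_card ⟨Finset.subset_univ _, fun h => hab ?_⟩).trans_eq ?_
    · simpa using h (Finset.mem_univ b)
    · simp
  have hne : (⟨v, hv⟩ : Esub n) ≠ 0 := fun h => by
    have := congrFun (congrArg Subtype.val h) a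
    simp only [v, Perm.SameCycle.refl, if_true, ZeroMemClass.coe_zero, Pi.zero_apply,
      sub_eq_zero, Nat.cast_inj] at this
    omega
  rw [detE, LinearMap.det_eq_zero_iff_ker_ne_bot, Submodule.ne_bot_iff]
  exact ⟨⟨v, hv⟩, by simp [hfix], hne⟩

lemma isConj_finRotate_of_forall_sameCycle {n : ℕ} {w : Perm (Fin n)} {a : Fin n}
    (h : ∀ b, w.SameCycle a b) : IsConj (finRotate n) w := by
  rcases lt_or_ge n 2 with hn | hn
  · have : Subsingleton (Fin n) := Fin.subsingleton_iff_le_one.2 (by omega)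
    rw [Subsingleton.elim w (finRotate n)]
  have : Nontrivial (Fin n) := Fin.nontrivial_iff_two_le.2 hn
  have hwa : w a ≠ a := fun hwa =>
    have ⟨b, hb⟩ := exists_ne a
    hb ((h b).eq_of_left hwa).symm
  have hcyc : w.IsCycle := (Perm.isCycle_iff_sameCycle hwa).2 fun {b} =>
    ⟨fun hb => ((h b).apply_eq_self_iff.not).1 hwa, fun _ => h b⟩
  have hsupp : w.support = Finset.univ :=
    Finset.eq_univ_of_forall fun b => Perm.mem_support.2 (((h b).apply_eq_self_iff.not).1 hwa)
  rw [Perm.isConj_iff_cycleType_eq, cycleType_finRotate_of_le hn, hcyc.cycleType, hsupp,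
    Finset.card_univ, Fintype.card_fin]

lemma detE_one_eq_zero_of_not_isConj {n : ℕ} [NeZero n] {w : Perm (Fin n)}
    (h : ¬IsConj (finRotate n) w) : detE n 1 w = 0 := by
  obtain ⟨b, hb⟩ : ∃ b, ¬ w.SameCycle 0 b :=
    not_forall.1 fun hw => h (isConj_finRotate_of_forall_sameCycle hw)
  exact detE_one_eq_zero_of_not_sameCycle hb

open Nat in
lemma card_isConj_finRotate (n : ℕ) :
    #{w : Perm (Fin n) | IsConj (finRotate n) w} = (n - 1)! := by
  rcases lt_or_ge n 2 with hn | hn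
  · have : Subsingleton (Fin n) := Fin.subsingleton_iff_le_one.2 (by omega)
    rw [Finset.filter_true_of_mem fun w _ => by rw [Subsingleton.elim w (finRotate n)],
      Finset.card_univ, Fintype.card_perm, Fintype.card_fin]
    interval_cases n <;> rfl
  simp_rw [Perm.isConj_iff_cycleType_eq, cycleType_finRotate_of_le hn,
    eq_comm (a := ({n} : Multiset ℕ))]
  rw [Perm.card_of_cycleType_singleton hn (by simp), Fintype.card_fin, Nat.choose_self, mul_one]

lemma Finset.sum_eq_card_isConj_nsmul {G M : Type*} [Group G] [Fintype G] [DecidableEq G]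
    [AddCommMonoid M] (f : G → M) (g : G) (hconj : ∀ h, IsConj g h → f h = f g)
    (hsupp : ∀ h, ¬IsConj g h → f h = 0) : ∑ h, f h = #{h | IsConj g h} • f g := by
  rw [← Finset.sum_filter_of_ne fun h _ hne => not_not.1 (mt (hsupp h) hne),
    Finset.sum_congr rfl fun h hh => hconj h (Finset.mem_filter.1 hh).2, Finset.sum_const]

lemma Polynomial.natDegree_geom_sum_X {R : Type*} [Semiring R] [Nontrivial R] (m : ℕ) :
    (∑ i ∈ Finset.range (m + 1), (X : R[X]) ^ i).natDegree = m := by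
  refine natDegree_eq_of_le_of_coeff_ne_zero
    (natDegree_sum_le_of_forall_le _ _ fun i hi => ?_) ?_
  · rw [natDegree_X_pow]
    exact Nat.lt_succ_iff.1 (Finset.mem_range.1 hi)
  · simp [coeff_X_pow]

lemma LinearMap.charpoly_eq_of_monic_of_aeval_eq_zero {R M : Type*} [Field R] [AddCommGroup M]
    [Module R M] [FiniteDimensional R M] {f : M →ₗ[R] M} {p : R[X]} (hp : p.Monic)
    (hdeg : p.natDegree = Module.finrank R M) (hfp : aeval f p = 0)
    (hmin : ∀ q : R[X], q.degree < p.degree → aeval f q = 0 → q = 0) : f.charpoly = p := by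
  have hminpoly : p = minpoly R f :=
    minpoly.unique' R f hp hfp fun q hq => (em (aeval f q = 0)).imp_left (hmin q hq)
  refine eq_of_monic_of_dvd_of_natDegree_le hp f.charpoly_monic ?_ ?_
  · exact hminpoly ▸ f.minpoly_dvd_charpoly
  · rw [f.charpoly_natDegree, hdeg]

lemma LinearMap.det_id_sub_smul {R M : Type*} [Field R] [AddCommGroup M] [Module R M]
    [FiniteDimensional R M] (f : M →ₗ[R] M) {t : R} (ht : t ≠ 0) :
    LinearMap.det (LinearMap.id - t • f) = t ^ Module.finrank R M * f.charpoly.eval t⁻¹ := by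
  have h : LinearMap.id - t • f = t • (algebraMap R (Module.End R M) t⁻¹ - f) := by
    rw [Algebra.algebraMap_eq_smul_one, smul_sub, smul_smul, mul_inv_cancel₀ ht, one_smul]
    rfl
  rw [h, LinearMap.det_smul, f.eval_charpoly]

lemma finRotate_pow_val_apply {n : ℕ} (k j : Fin n) : (finRotate n ^ (k : ℕ)) j = j + k := by
  rw [Perm.coe_pow, ← finCycle_eq_finRotate_iterate, finCycle_apply]

lemma aeval_geom_sum_permE_finRotate (m : ℕ) :
    aeval (permE (m + 1) (finRotate (m + 1)))
      (∑ i ∈ Finset.range (m + 1), (X : K[X]) ^ i) = 0 := by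
  ext x j
  simp only [map_sum, map_pow, aeval_X, LinearMap.coe_sum, Finset.sum_apply,
    Submodule.coe_sum, permE_pow_apply, LinearMap.zero_apply, ZeroMemClass.coe_zero,
    Pi.zero_apply]
  rw [← Fin.sum_univ_eq_sum_range fun i => (x : Fin (m + 1) → K) ((finRotate (m + 1) ^ i) j)]
  simp_rw [finRotate_pow_val_apply]
  exact (Fintype.sum_equiv (Equiv.addLeft j) _ _ fun _ => rfl).trans ((mem_Esub_iff _).1 x.2)

lemma aeval_permE_finRotate_apply_zero (m : ℕ) {q : K[X]} (hq : q.natDegree < m + 1)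
    (x : Esub (m + 1)) :
    (aeval (permE (m + 1) (finRotate (m + 1))) q x : Fin (m + 1) → K) 0
      = ∑ k : Fin (m + 1), q.coeff k * (x : Fin (m + 1) → K) k := by
  rw [aeval_eq_sum_range' hq, ← Fin.sum_univ_eq_sum_range]
  simp [permE_pow_apply, finRotate_pow_val_apply]

lemma eq_zero_of_aeval_permE_finRotate_eq_zero (m : ℕ) {q : K[X]} (hq : q.degree < m)
    (h : aeval (permE (m + 1) (finRotate (m + 1))) q = 0) : q = 0 := by
  ext k
  rcases lt_or_ge k m with hk | hk
  · -- at the coordinate `0`, `q(c) (e_k - e_m)` is `q_k - q_m = q_k`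
    set x : Fin (m + 1) → K := Pi.single ⟨k, by omega⟩ 1 - Pi.single (Fin.last m) 1
    have hx : x ∈ Esub (m + 1) := by simp [mem_Esub_iff, x, Finset.sum_sub_distrib]
    have hqm : q.coeff m = 0 := coeff_eq_zero_of_degree_lt hq
    have hdeg : q.natDegree < m + 1 :=
      Nat.lt_succ_of_le (natDegree_le_of_degree_le (mod_cast hq.le))
    have := aeval_permE_finRotate_apply_zero m hdeg ⟨x, hx⟩
    rw [h] at this
    simp only [x, Pi.sub_apply, Pi.single_apply, mul_sub, mul_ite, mul_one, mul_zero,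
      Finset.sum_sub_distrib, Finset.sum_ite_eq', Finset.mem_univ, if_true, Fin.val_last, hqm,
      sub_zero] at this
    exact this.symm
  · exact coeff_eq_zero_of_degree_lt (hq.trans_le (mod_cast hk))

lemma charpoly_permE_finRotate (m : ℕ) :
    (permE (m + 1) (finRotate (m + 1))).charpoly
      = ∑ i ∈ Finset.range (m + 1), (X : K[X]) ^ i := by
  have hdeg := natDegree_geom_sum_X (R := K) m
  have hmonic : (∑ i ∈ Finset.range (m + 1), (X : K[X]) ^ i).Monic :=
    monic_geom_sum_X m.succ_ne_zero
  refine LinearMap.charpoly_eq_of_monic_of_aeval_eq_zero hmonic (hdeg.trans (finrank_Esub m).symm)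
    (aeval_geom_sum_permE_finRotate m) fun q hq => eq_zero_of_aeval_permE_finRotate_eq_zero m ?_
  rwa [degree_eq_natDegree hmonic.ne_zero, hdeg] at hq

lemma detE_finRotate (m : ℕ) {t : K} (ht : t ≠ 0) :
    detE (m + 1) t (finRotate (m + 1)) = ∑ i ∈ Finset.range (m + 1), t ^ i := by
  rw [detE, LinearMap.det_id_sub_smul _ ht, charpoly_permE_finRotate, finrank_Esub, eval_geom_sum,
    Finset.mul_sum, ← Finset.sum_range_reflect]
  refine Finset.sum_congr rfl fun i hi => ?_
  have hi : i ≤ m := Nat.lt_succ_iff.1 (Finset.mem_range.1 hi)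
  rw [Nat.add_sub_cancel, inv_pow, ← pow_sub₀ _ ht (Nat.sub_le m i), Nat.sub_sub_self hi]

open Nat in
lemma sum_sgnChar_mul_detE_div_detE (m : ℕ) {t : K} (ht : t ≠ 0) :
    ∑ w : Perm (Fin (m + 1)), sgnChar (m + 1) w * detE (m + 1) 1 w / detE (m + 1) t w
      = m ! • ((-1) ^ m * (m + 1) / ∑ i ∈ Finset.range (m + 1), t ^ i) := by
  rw [Finset.sum_eq_card_isConj_nsmul _ (finRotate (m + 1))
    (fun w hw => by rw [sgnChar_eq_of_isConj hw, detE_eq_of_isConj _ hw, detE_eq_of_isConj _ hw])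
    (fun w hw => by rw [detE_one_eq_zero_of_not_isConj hw, mul_zero, zero_div]),
    card_isConj_finRotate, detE_finRotate m one_ne_zero, detE_finRotate m ht]
  simp [sgnChar, sign_finRotate]

/-- the elliptic fake degree of the sign character of S_n equals
(1-q)^n/(1-q^n); here F_[π] = ((q-1)^{n-1}/n!) Σ_w π(w) det_E(1-w)/det_E(1-qw),
an identity in ℚ(q) with q = X. -/
theorem statement3 (n : ℕ) (hn : 1 ≤ n) :
    ((RatFunc.X : K) - 1) ^ (n - 1) * ((n.factorial : K))⁻¹ *
      ∑ w : Equiv.Perm (Fin n), sgnChar n w * detE n 1 w / detE n RatFunc.X w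
    = (1 - (RatFunc.X : K)) ^ n / (1 - (RatFunc.X : K) ^ n) := by
  obtain ⟨m, rfl⟩ : ∃ m, n = m + 1 := ⟨n - 1, by omega⟩
  have hXpow : (RatFunc.X : K) ^ (m + 1) ≠ 1 := fun h => by
    have h' : (X : ℚ[X]) ^ (m + 1) = 1 :=
      IsFractionRing.injective ℚ[X] K (by simpa [RatFunc.algebraMap_X] using h)
    simpa using congrArg natDegree h'
  have hgeom := mul_neg_geom_sum (RatFunc.X : K) (m + 1)
  have hne : (1 - RatFunc.X) * ∑ i ∈ Finset.range (m + 1), (RatFunc.X : K) ^ i ≠ 0 :=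
    hgeom ▸ sub_ne_zero.2 hXpow.symm
  have hsign : (1 - RatFunc.X : K) ^ m = (-1) ^ m * (RatFunc.X - 1) ^ m := by
    rw [← neg_sub, neg_pow]
  rw [sum_sgnChar_mul_detE_div_detE m RatFunc.X_ne_zero, ← hgeom, Nat.add_sub_cancel,
    nsmul_eq_mul, pow_succ', hsign, Nat.factorial_succ]
  push_cast
  field_simp [mul_ne_zero_iff.1 hne, Nat.factorial_ne_zero]
end
end

section
/- An element w_α of W(B_n) (α a partition of n, w_α a product of Coxeter elements of W(B_{α_i})) lies in the index-2 subgroup W(D_n) if and only if α has an even number of parts; and the set {w_α : α ⊢ n, |α| even} is a complete set of representatives for the elliptic conjugacy classes of W(D_n). -/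
set_option maxHeartbeats 1000000
set_option synthInstance.maxHeartbeats 400000

/-!
STATEMENT 13: the element `w_α ∈ W(B_n)` (a product of Coxeter elements of the
`W(B_{α_i})`, i.e. an element all of whose cycles are negative, of cycle type `α ⊢ n`)
lies in the index-2 subgroup `W(D_n)` of even sign changes iff `α` has an even number
of parts; and `{w_α : α ⊢ n, |α| even}` is a complete set of representatives of the
elliptic conjugacy classes of `W(D_n)`.
-/

open scoped BigOperators Classical

noncomputable section

/-- an element of `W(B_n)`. -/
abbrev BElt (n : ℕ) := Equiv.Perm (Fin n) × (Fin n → Bool)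

/-- the signed permutation matrix of `p ∈ W(B_n)`, over `ℚ`. -/
def BMatQ (n : ℕ) (p : BElt n) : Matrix (Fin n) (Fin n) ℚ :=
  Matrix.of fun i j => if p.1 j = i then (if p.2 j then -1 else 1) else 0

/-- membership in `W(D_n)`: an even number of sign changes. -/
def inD (n : ℕ) (p : BElt n) : Prop :=
  Even (Finset.univ.filter (fun i => p.2 i = true)).card

/-- every cycle of `p` (fixed points included) has sign product `-1`;
such elements are the `w_α`, `α` the cycle type. -/
def negAll (n : ℕ) (p : BElt n) : Prop :=
  ∀ i : Fin n,
    (∏ j ∈ Finset.univ.filter (fun j => p.1.SameCycle i j),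
      (if p.2 j then (-1 : ℤ) else 1)) = -1

/-- conjugacy inside `W(D_n)`. -/
def ConjD (n : ℕ) (p p' : BElt n) : Prop :=
  ∃ r : BElt n, inD n r ∧ BMatQ n r * BMatQ n p = BMatQ n p' * BMatQ n r

/-- the cycle type, as a partition of `n` (fixed points included). -/
def cycType (n : ℕ) (p : BElt n) : Multiset ℕ :=
  (Equiv.Perm.partition p.1).parts

/-!
A signed permutation `(σ, s)` sends `e_j` to `± e_{σ j}`, so a fixed vector satisfies
`v (σ j) = s_j v_j`, and going once around a cycle multiplies `v` by the sign product of that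
cycle. Hence the element is elliptic iff every cycle is negative, i.e. iff it is some `w_α`, and
then its total number of sign changes has the parity of the number of cycles.

Two `w_α` of the same type are conjugate in `W(B_n)`: conjugate the permutations by some `τ`;
the remaining sign discrepancy `c_j` has product `1` on every cycle, so `ε (σ j) = c_j ε_j`
can be solved cycle by cycle. If the conjugator has an odd number of sign changes, multiply it
by one negative cycle of `w_α` together with its signs: this commutes with `w_α` and has an odd
number of sign changes, so the product lies in `W(D_n)`.
-/

open Equiv Equiv.Perm Finset Function
open scoped Matrix

section BoolSign

variable {M : Type*} [Monoid M] [HasDistribNeg M]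

def boolSign (b : Bool) : M := if b then -1 else 1

@[simp] lemma boolSign_false : (boolSign false : M) = 1 := rfl

@[simp] lemma boolSign_true : (boolSign true : M) = -1 := rfl

lemma boolSign_xor (a b : Bool) : (boolSign (xor a b) : M) = boolSign a * boolSign b := by
  cases a <;> cases b <;> simp

lemma boolSign_injective (h : (-1 : M) ≠ 1) : Injective (boolSign : Bool → M) := by
  intro a b hab
  cases a <;> cases b <;> simp_all [eq_comm]

lemma boolSign_decide_eq_neg_one (u : ℤˣ) : boolSign (decide (u = -1)) = u := by
  rcases Int.units_eq_one_or u with rfl | rfl <;> rfl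

end BoolSign

lemma prod_boolSign_eq_neg_one_pow {M ι : Type*} [CommMonoid M] [HasDistribNeg M]
    (s : Finset ι) (f : ι → Bool) :
    ∏ i ∈ s, (boolSign (f i) : M) = (-1) ^ #{i ∈ s | f i = true} := by
  simp only [boolSign, prod_ite, prod_const_one, mul_one, prod_const]

section Cocycle

variable {α M : Type*} [CommMonoid M] (p : Perm α)

lemma pow_minimalPeriod_apply (i : α) : (p ^ minimalPeriod p i) i = i := by
  rw [← iterate_eq_pow]
  exact isPeriodicPt_minimalPeriod p i

def pathProd (c : α → M) (i : α) (k : ℕ) : M := ∏ t ∈ range k, c ((p ^ t) i)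

variable {p} {c : α → M} {i : α}

lemma pathProd_succ (k : ℕ) : pathProd p c i (k + 1) = c ((p ^ k) i) * pathProd p c i k := by
  rw [pathProd, prod_range_succ, mul_comm]
  rfl

lemma pathProd_add (k l : ℕ) :
    pathProd p c i (k + l) = pathProd p c i k * pathProd p c ((p ^ k) i) l := by
  rw [pathProd, pathProd, pathProd, prod_range_add]
  congr 1
  refine prod_congr rfl fun t _ => ?_
  rw [add_comm, pow_add, Perm.mul_apply]

lemma apply_pow_eq_pathProd_mul {v : α → M} (hv : ∀ j, v (p j) = c j * v j) (k : ℕ) :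
    v ((p ^ k) i) = pathProd p c i k * v i := by
  induction k with
  | zero => simp [pathProd]
  | succ k ih => rw [pow_succ', Perm.mul_apply, hv, ih, pathProd_succ, mul_assoc]

lemma pathProd_mod (h : pathProd p c i (minimalPeriod p i) = 1) (k : ℕ) :
    pathProd p c i k = pathProd p c i (k % minimalPeriod p i) := by
  have hperiod (q r : ℕ) : pathProd p c i (minimalPeriod p i * q + r) = pathProd p c i r := by
    induction q with
    | zero => simp
    | succ q ih =>
      rw [mul_add_one, add_comm _ (minimalPeriod p i), add_assoc, pathProd_add, h,
        pow_minimalPeriod_apply, one_mul, ih]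
  rw [← hperiod (k / minimalPeriod p i) (k % minimalPeriod p i), Nat.div_add_mod]

lemma pathProd_eq_of_pow_apply_eq [Finite α] (h : pathProd p c i (minimalPeriod p i) = 1)
    {k l : ℕ} (hkl : (p ^ k) i = (p ^ l) i) : pathProd p c i k = pathProd p c i l := by
  have hpos := minimalPeriod_pos_of_mem_periodicPts (p.injective.mem_periodicPts i)
  rw [pathProd_mod h k, pathProd_mod h l,
    (iterate_eq_iterate_iff_of_lt_minimalPeriod (Nat.mod_lt k hpos) (Nat.mod_lt l hpos)).1]
  simpa only [iterate_mod_minimalPeriod_eq, iterate_eq_pow] using hkl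

lemma exists_cocycle_on_orbit [Finite α] (h : pathProd p c i (minimalPeriod p i) = 1) :
    ∃ g : α → M, g i = 1 ∧ ∀ j, p.SameCycle i j → g (p j) = c j * g j := by
  choose! k hk using fun j (hj : p.SameCycle i j) => hj.exists_nat_pow_eq
  refine ⟨fun j => pathProd p c i (k j), ?_, fun j hj => ?_⟩
  · exact pathProd_eq_of_pow_apply_eq (k := k i) (l := 0) h (hk i (SameCycle.refl p i))
  · have hpj : (p ^ k (p j)) i = (p ^ (k j + 1)) i := by
      rw [hk _ (sameCycle_apply_right.2 hj), pow_succ', Perm.mul_apply, hk j hj]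
    dsimp only
    rw [pathProd_eq_of_pow_apply_eq h hpj, pathProd_succ, hk j hj]

end Cocycle

section Orbit

variable {α : Type*} (p : Perm α)

def cycleRep (j : α) : α := (Quotient.mk (SameCycle.setoid p) j).out

lemma sameCycle_cycleRep (j : α) : p.SameCycle (cycleRep p j) j :=
  Quotient.mk_out (s := SameCycle.setoid p) j

lemma cycleRep_eq_cycleRep_iff {i j : α} : cycleRep p i = cycleRep p j ↔ p.SameCycle i j :=
  Quotient.out_inj.trans Quotient.eq

lemma cycleRep_apply (j : α) : cycleRep p (p j) = cycleRep p j :=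
  (cycleRep_eq_cycleRep_iff p).2 (sameCycle_apply_left.2 (SameCycle.refl p j))

variable [Fintype α] [DecidableEq α]

def orbitFinset (i : α) : Finset α := {j | p.SameCycle i j}

variable {p}

@[simp] lemma mem_orbitFinset {i j : α} : j ∈ orbitFinset p i ↔ p.SameCycle i j := by
  simp [orbitFinset]

lemma orbitFinset_eq_singleton {i : α} (hi : i ∉ p.support) : orbitFinset p i = {i} := by
  ext j
  simp only [mem_orbitFinset, mem_singleton]
  exact ⟨fun h => (h.eq_of_left (notMem_support.1 hi)).symm, fun h => h ▸ SameCycle.refl p i⟩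

lemma support_cycleOf_eq_orbitFinset {i : α} (hi : i ∈ p.support) :
    (p.cycleOf i).support = orbitFinset p i := by
  ext j
  rw [mem_support_cycleOf_iff, mem_orbitFinset]
  exact and_iff_left hi

variable {M : Type*} [CommMonoid M]

lemma prod_orbitFinset_eq_pathProd (c : α → M) (i : α) :
    ∏ j ∈ orbitFinset p i, c j = pathProd p c i (minimalPeriod p i) := by
  have hinj : Set.InjOn (fun t => (p ^ t) i) (range (minimalPeriod p i)) := by
    simpa [Set.InjOn, iterate_eq_pow] using iterate_injOn_Iio_minimalPeriod (f := p) (x := i)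
  rw [pathProd, ← prod_image hinj]
  congr 1
  ext j
  simp only [mem_orbitFinset, mem_image, mem_range]
  refine ⟨fun h => ?_, fun ⟨t, _, ht⟩ => ht ▸ sameCycle_pow_right.2 (SameCycle.refl p i)⟩
  obtain ⟨k, rfl⟩ := h.exists_nat_pow_eq
  refine ⟨k % minimalPeriod p i,
    Nat.mod_lt k (minimalPeriod_pos_of_mem_periodicPts (p.injective.mem_periodicPts i)), ?_⟩
  simp only [← iterate_eq_pow, iterate_mod_minimalPeriod_eq]

lemma prod_orbitFinset_conj (σ : Perm α) (f : α → M) (i : α) :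
    ∏ j ∈ orbitFinset p i, f (σ j) = ∏ j ∈ orbitFinset (σ * p * σ⁻¹) (σ i), f j :=
  prod_equiv σ (fun j => by simp [sameCycle_conj]) fun _ _ => rfl

lemma exists_cocycle {c : α → M} (h : ∀ i, ∏ j ∈ orbitFinset p i, c j = 1) :
    ∃ g : α → M, ∀ j, g (p j) = c j * g j := by
  choose g _ hg using fun i =>
    exists_cocycle_on_orbit ((prod_orbitFinset_eq_pathProd c i).symm.trans (h i))
  exact ⟨fun j => g (cycleRep p j) j, fun j => by
    simpa only [cycleRep_apply] using hg _ j (sameCycle_cycleRep p j)⟩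

lemma exists_xor_cocycle {c : α → Bool}
    (h : ∀ i, ∏ j ∈ orbitFinset p i, (boolSign (c j) : ℤˣ) = 1) :
    ∃ ε : α → Bool, ∀ j, ε (p j) = xor (c j) (ε j) := by
  obtain ⟨g, hg⟩ := exists_cocycle h
  refine ⟨fun j => decide (g j = -1), fun j => boolSign_injective (M := ℤˣ) (by decide) ?_⟩
  rw [boolSign_xor, boolSign_decide_eq_neg_one, boolSign_decide_eq_neg_one, hg]

lemma prod_support_eq_prod_cycleFactorsFinset (f : α → M) :
    ∏ j ∈ p.support, f j = ∏ c ∈ p.cycleFactorsFinset, ∏ j ∈ c.support, f j := by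
  rw [← prod_fiberwise_of_maps_to (g := p.cycleOf)
    fun j hj => cycleOf_mem_cycleFactorsFinset_iff.2 hj]
  refine prod_congr rfl fun c hc => prod_congr ?_ fun _ _ => rfl
  ext j
  rw [mem_filter, ← eq_cycleOf_of_mem_cycleFactorsFinset_iff p c hc j]
  exact ⟨fun h => h.2.symm, fun h => ⟨mem_cycleFactorsFinset_support_le hc
    ((eq_cycleOf_of_mem_cycleFactorsFinset_iff p c hc j).1 h), h.symm⟩⟩

lemma prod_eq_pow_card_parts_partition {f : α → M} {a : M}
    (h : ∀ i, ∏ j ∈ orbitFinset p i, f j = a) :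
    ∏ j, f j = a ^ Multiset.card p.partition.parts := by
  have hcycle : ∀ c ∈ p.cycleFactorsFinset, ∏ j ∈ c.support, f j = a := by
    intro c hc
    obtain ⟨i, hi⟩ := (mem_cycleFactorsFinset_iff.1 hc).1.nonempty_support
    rw [cycle_is_cycleOf hi hc,
      support_cycleOf_eq_orbitFinset (mem_cycleFactorsFinset_support_le hc hi), h]
  have hfixed : ∀ i ∈ p.supportᶜ, f i = a := fun i hi => by
    rw [← h i, orbitFinset_eq_singleton (mem_compl.1 hi), prod_singleton]
  rw [← prod_mul_prod_compl p.support, prod_support_eq_prod_cycleFactorsFinset,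
    prod_congr rfl hcycle, prod_congr rfl hfixed, prod_const, prod_const, ← pow_add,
    parts_partition, Multiset.card_add, Multiset.card_replicate, cycleType_def,
    Multiset.card_map, card_compl]
  rfl

lemma prod_orbitFinset_boolSign_cycleRep [HasDistribNeg M] (i : α) :
    ∏ j ∈ orbitFinset p i, (boolSign (decide (cycleRep p j = j)) : M) = -1 := by
  have hrep : ∀ j ∈ orbitFinset p i,
      (boolSign (decide (cycleRep p j = j)) : M) = if cycleRep p i = j then -1 else 1 := by
    intro j hj
    rw [(cycleRep_eq_cycleRep_iff p).2 (mem_orbitFinset.1 hj).symm]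
    by_cases hij : cycleRep p i = j <;> simp [hij]
  rw [prod_congr rfl hrep, prod_ite_eq, if_pos (mem_orbitFinset.2 (sameCycle_cycleRep p i).symm)]

end Orbit

lemma Nat.Partition.parts_eq_filter_add_replicate {m : ℕ} (π : m.Partition) :
    π.parts = π.parts.filter (2 ≤ ·) +
      Multiset.replicate (m - (π.parts.filter (2 ≤ ·)).sum) 1 := by
  have hones : π.parts.filter (¬ 2 ≤ ·) =
      Multiset.replicate (Multiset.card (π.parts.filter (¬ 2 ≤ ·))) 1 :=
    Multiset.eq_replicate_card.2 fun b hb => by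
      have := π.parts_pos (Multiset.mem_filter.1 hb).1
      have := (Multiset.mem_filter.1 hb).2
      omega
  have hsum := π.parts_sum
  rw [← Multiset.filter_add_not (2 ≤ ·) π.parts, Multiset.sum_add, hones,
    Multiset.sum_replicate, smul_eq_mul, mul_one] at hsum
  conv_lhs => rw [← Multiset.filter_add_not (2 ≤ ·) π.parts]
  rw [hones]
  congr 2
  omega

lemma exists_perm_parts_partition_eq {β : Type*} [Fintype β] [DecidableEq β] {m : ℕ}
    (π : m.Partition) (hm : Fintype.card β = m) :
    ∃ σ : Perm β, σ.partition.parts = π.parts := by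
  subst hm
  have hle : (π.parts.filter (2 ≤ ·)).sum ≤ Fintype.card β := by
    have := congrArg Multiset.sum (Multiset.filter_add_not (2 ≤ ·) π.parts)
    rw [Multiset.sum_add, π.parts_sum] at this
    omega
  obtain ⟨σ, hσ⟩ := (exists_with_cycleType_iff β).2
    ⟨hle, fun a ha => (Multiset.mem_filter.1 ha).2⟩
  refine ⟨σ, ?_⟩
  rw [parts_partition, ← sum_cycleType, hσ]
  exact π.parts_eq_filter_add_replicate.symm

section SignedPerm

variable {n : ℕ}

def BElt.mul (a b : BElt n) : BElt n := (a.1 * b.1, fun j => xor (a.2 (b.1 j)) (b.2 j))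

lemma BMatQ_apply (p : BElt n) (i j : Fin n) :
    BMatQ n p i j = if p.1 j = i then boolSign (p.2 j) else 0 := rfl

lemma BMatQ_mul (a b : BElt n) : BMatQ n (BElt.mul a b) = BMatQ n a * BMatQ n b := by
  ext i j
  rw [Matrix.mul_apply, sum_eq_single (b.1 j) (fun k _ hk => by simp [BMatQ_apply, Ne.symm hk])
    (by simp)]
  simp only [BMatQ_apply, BElt.mul, Perm.mul_apply, boolSign_xor, if_pos, ite_mul, zero_mul]

lemma BMatQ_injective : Injective (BMatQ n) := by
  intro a b h
  have hentry (j : Fin n) : BMatQ n a (a.1 j) j = BMatQ n b (a.1 j) j := by rw [h]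
  have hperm : a.1 = b.1 := Equiv.ext fun j => by
    by_contra hne
    have := hentry j
    cases ha : a.2 j <;> simp [BMatQ_apply, Ne.symm hne, ha] at this
  refine Prod.ext hperm (funext fun j => boolSign_injective (M := ℚ) (by norm_num) ?_)
  simpa [BMatQ_apply, hperm] using hentry j

lemma BElt.mul_assoc (a b c : BElt n) :
    BElt.mul (BElt.mul a b) c = BElt.mul a (BElt.mul b c) :=
  BMatQ_injective (by simp only [BMatQ_mul, _root_.mul_assoc])

lemma BMatQ_one : BMatQ n (1, fun _ => false) = 1 := by
  ext i j
  simp [BMatQ_apply, Matrix.one_apply, eq_comm]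

lemma BMatQ_mulVec_apply (p : BElt n) (v : Fin n → ℚ) (j : Fin n) :
    (BMatQ n p *ᵥ v) (p.1 j) = boolSign (p.2 j) * v j := by
  rw [Matrix.mulVec, dotProduct, sum_eq_single j (fun k _ hk => by simp [BMatQ_apply, hk])
    (by simp)]
  simp [BMatQ_apply]

lemma BMatQ_mulVec_eq_self_iff (p : BElt n) (v : Fin n → ℚ) :
    BMatQ n p *ᵥ v = v ↔ ∀ j, v (p.1 j) = boolSign (p.2 j) * v j := by
  refine ⟨fun h j => by rw [← BMatQ_mulVec_apply, h], fun h => funext fun i => ?_⟩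
  obtain ⟨j, rfl⟩ := p.1.surjective i
  rw [BMatQ_mulVec_apply, h]

lemma Matrix.det_one_sub_eq_zero_iff {ι K : Type*} [Fintype ι] [DecidableEq ι] [Field K]
    (A : Matrix ι ι K) : (1 - A).det = 0 ↔ ∃ v ≠ 0, A *ᵥ v = v := by
  rw [← Matrix.exists_mulVec_eq_zero_iff]
  simp only [Matrix.sub_mulVec, Matrix.one_mulVec, sub_eq_zero]
  exact exists_congr fun v => and_congr_right' eq_comm

lemma inD_iff_prod_boolSign (p : BElt n) : inD n p ↔ ∏ j, (boolSign (p.2 j) : ℤ) = 1 := by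
  rw [prod_boolSign_eq_neg_one_pow, neg_one_pow_eq_one_iff_even (by norm_num)]
  rfl

lemma not_inD_iff_prod_boolSign (p : BElt n) :
    ¬ inD n p ↔ ∏ j, (boolSign (p.2 j) : ℤ) = -1 := by
  rw [prod_boolSign_eq_neg_one_pow, neg_one_pow_eq_neg_one_iff_odd (by norm_num),
    ← Nat.not_even_iff_odd]
  rfl

lemma inD_mul_of_not_inD {a b : BElt n} (ha : ¬ inD n a) (hb : ¬ inD n b) :
    inD n (BElt.mul a b) := by
  rw [not_inD_iff_prod_boolSign] at ha hb
  rw [inD_iff_prod_boolSign, BElt.mul]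
  simp only [boolSign_xor, prod_mul_distrib,
    Equiv.prod_comp b.1 (fun k => (boolSign (a.2 k) : ℤ)), ha, hb]
  norm_num

lemma negAll_iff_odd {p : BElt n} :
    negAll n p ↔ ∀ i, Odd #{j ∈ orbitFinset p.1 i | p.2 j = true} := by
  refine forall_congr' fun i => ?_
  change ∏ j ∈ orbitFinset p.1 i, (boolSign (p.2 j) : ℤ) = -1 ↔ _
  rw [prod_boolSign_eq_neg_one_pow, neg_one_pow_eq_neg_one_iff_odd (by norm_num)]

lemma negAll.prod_boolSign {M : Type*} [CommMonoid M] [HasDistribNeg M] {p : BElt n}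
    (hp : negAll n p) (i : Fin n) : ∏ j ∈ orbitFinset p.1 i, (boolSign (p.2 j) : M) = -1 := by
  rw [prod_boolSign_eq_neg_one_pow]
  exact (negAll_iff_odd.1 hp i).neg_one_pow

lemma inD_iff_even_card_cycType {p : BElt n} (hp : negAll n p) :
    inD n p ↔ Even (Multiset.card (cycType n p)) := by
  rw [inD_iff_prod_boolSign, prod_eq_pow_card_parts_partition hp.prod_boolSign,
    neg_one_pow_eq_one_iff_even (by norm_num)]
  rfl

lemma det_one_sub_BMatQ_ne_zero {p : BElt n} (hp : negAll n p) : (1 - BMatQ n p).det ≠ 0 := by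
  rw [Ne, Matrix.det_one_sub_eq_zero_iff]
  rintro ⟨v, hv0, hv⟩
  refine hv0 (funext fun i => ?_)
  have hround := apply_pow_eq_pathProd_mul ((BMatQ_mulVec_eq_self_iff p v).1 hv) (i := i)
    (minimalPeriod p.1 i)
  rw [pow_minimalPeriod_apply, ← prod_orbitFinset_eq_pathProd, hp.prod_boolSign] at hround
  simp only [Pi.zero_apply]
  linarith

lemma negAll_of_det_ne_zero {p : BElt n} (hdet : (1 - BMatQ n p).det ≠ 0) : negAll n p := by
  rw [negAll_iff_odd]
  by_contra! hneg
  obtain ⟨i, hi⟩ := hneg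
  have hround : pathProd p.1 (fun j => (boolSign (p.2 j) : ℚ)) i (minimalPeriod p.1 i) = 1 := by
    rw [← prod_orbitFinset_eq_pathProd, prod_boolSign_eq_neg_one_pow,
      (Nat.not_odd_iff_even.1 hi).neg_one_pow]
  obtain ⟨g, hgi, hg⟩ := exists_cocycle_on_orbit hround
  refine hdet ((Matrix.det_one_sub_eq_zero_iff _).2
    ⟨fun j => if p.1.SameCycle i j then g j else 0, fun h => ?_, ?_⟩)
  · simpa [hgi, SameCycle.refl] using congrFun h i
  · rw [BMatQ_mulVec_eq_self_iff]
    intro j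
    by_cases hj : p.1.SameCycle i j
    · simp [hj, hg j hj]
    · simp [hj]

lemma conjD_refl (p : BElt n) : ConjD n p p :=
  ⟨(1, fun _ => false), by simp [inD], by rw [BMatQ_one, one_mul, mul_one]⟩

lemma conjD_iff {p p' : BElt n} :
    ConjD n p p' ↔ ∃ r, inD n r ∧ BElt.mul r p = BElt.mul p' r := by
  simp only [ConjD, ← BMatQ_mul, BMatQ_injective.eq_iff]

lemma cycType_eq_of_conjD {p p' : BElt n} (h : ConjD n p p') : cycType n p = cycType n p' := by
  obtain ⟨r, -, hr⟩ := conjD_iff.1 h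
  have hconj : r.1 * p.1 * r.1⁻¹ = p'.1 := mul_inv_eq_iff_eq_mul.2 (congrArg Prod.fst hr)
  exact congrArg Nat.Partition.parts (partition_eq_of_isConj.1 (isConj_iff.2 ⟨r.1, hconj⟩))

lemma exists_mul_eq_mul_of_cycType_eq {p p' : BElt n} (hp : negAll n p) (hp' : negAll n p')
    (h : cycType n p = cycType n p') : ∃ r : BElt n, BElt.mul r p = BElt.mul p' r := by
  obtain ⟨σ, hσ⟩ := isConj_iff.1 (partition_eq_of_isConj.2 (Nat.Partition.ext h))
  have horbit (i : Fin n) :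
      ∏ j ∈ orbitFinset p.1 i, (boolSign (xor (p.2 j) (p'.2 (σ j))) : ℤˣ) = 1 := by
    simp only [boolSign_xor, prod_mul_distrib]
    rw [prod_orbitFinset_conj σ (fun j => (boolSign (p'.2 j) : ℤˣ)), hσ, hp.prod_boolSign,
      hp'.prod_boolSign, neg_one_mul, neg_neg]
  obtain ⟨ε, hε⟩ := exists_xor_cocycle horbit
  refine ⟨(σ, ε), Prod.ext ?_ (funext fun j => ?_)⟩
  · show σ * p.1 = p'.1 * σ
    rw [← hσ, inv_mul_cancel_right]
  · show xor (ε (p.1 j)) (p.2 j) = xor (p'.2 (σ j)) (ε j)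
    rw [hε]
    cases p.2 j <;> cases p'.2 (σ j) <;> cases ε j <;> rfl

lemma exists_not_inD_mul_comm {p : BElt n} (hp : negAll n p) (i : Fin n) :
    ∃ z : BElt n, ¬ inD n z ∧ BElt.mul z p = BElt.mul p z := by
  refine ⟨(p.1.cycleOf i, fun j => decide (p.1.SameCycle i j) && p.2 j), ?_,
    Prod.ext (Equiv.ext fun j => ?_) (funext fun j => ?_)⟩
  · rw [not_inD_iff_prod_boolSign, ← hp.prod_boolSign i, orbitFinset, prod_filter]
    refine prod_congr rfl fun j _ => ?_
    by_cases hj : p.1.SameCycle i j <;> simp [hj]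
  · by_cases hj : p.1.SameCycle i j <;>
      simp [BElt.mul, cycleOf_apply, hj, sameCycle_apply_right]
  · by_cases hj : p.1.SameCycle i j <;>
      simp [BElt.mul, cycleOf_apply, hj, sameCycle_apply_right]

lemma conjD_of_cycType_eq {p p' : BElt n} (hp : negAll n p) (hp' : negAll n p')
    (h : cycType n p = cycType n p') : ConjD n p p' := by
  obtain ⟨r, hr⟩ := exists_mul_eq_mul_of_cycType_eq hp hp' h
  by_cases hrD : inD n r
  · exact conjD_iff.2 ⟨r, hrD, hr⟩
  obtain ⟨i⟩ : Nonempty (Fin n) := by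
    by_contra hempty
    exact hrD (by simp [inD, univ_eq_empty_iff.2 (not_nonempty_iff.1 hempty)])
  obtain ⟨z, hzD, hz⟩ := exists_not_inD_mul_comm hp i
  refine conjD_iff.2 ⟨BElt.mul r z, inD_mul_of_not_inD hrD hzD, ?_⟩
  rw [BElt.mul_assoc, hz, ← BElt.mul_assoc, hr, BElt.mul_assoc]

lemma exists_negAll_cycType_eq (π : Nat.Partition n) :
    ∃ p : BElt n, negAll n p ∧ cycType n p = π.parts := by
  obtain ⟨σ, hσ⟩ := exists_perm_parts_partition_eq (β := Fin n) π (Fintype.card_fin n)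
  exact ⟨(σ, fun j => decide (cycleRep σ j = j)), prod_orbitFinset_boolSign_cycleRep, hσ⟩

end SignedPerm

theorem statement13 (n : ℕ) :
    -- w_α ∈ W(D_n) iff the number of parts |α| is even
    (∀ p : BElt n, negAll n p →
        (inD n p ↔ Even (Multiset.card (cycType n p)))) ∧
    -- each w_α is elliptic
    (∀ p : BElt n, negAll n p →
        Matrix.det ((1 : Matrix (Fin n) (Fin n) ℚ) - BMatQ n p) ≠ 0) ∧
    -- every elliptic element of W(D_n) is W(D_n)-conjugate to some w_α ∈ W(D_n)
    (∀ p' : BElt n, inD n p' →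
        Matrix.det ((1 : Matrix (Fin n) (Fin n) ℚ) - BMatQ n p') ≠ 0 →
        ∃ p : BElt n, negAll n p ∧ inD n p ∧ ConjD n p p') ∧
    -- two such representatives are W(D_n)-conjugate iff they have the same type
    (∀ p p' : BElt n, negAll n p → negAll n p' → inD n p → inD n p' →
        (ConjD n p p' ↔ cycType n p = cycType n p')) ∧
    -- every partition α of n with an even number of parts is realized by some w_α
    (∀ α : Nat.Partition n, Even (Multiset.card α.parts) →
        ∃ p : BElt n, negAll n p ∧ cycType n p = α.parts) :=
  ⟨fun _ hp => inD_iff_even_card_cycType hp,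
    fun _ hp => det_one_sub_BMatQ_ne_zero hp,
    fun p' hD hdet => ⟨p', negAll_of_det_ne_zero hdet, hD, conjD_refl p'⟩,
    fun _ _ hp hp' _ _ => ⟨cycType_eq_of_conjD, conjD_of_cycType_eq hp hp'⟩,
    fun α _ => exists_negAll_cycType_eq α⟩

end
end

section
/- Let W^a = W ⋉ Q be an affine Weyl group with W acting on E = Q⊗ℝ. If C is an elliptic conjugacy class of W^a (finite part elliptic in W), then there is exactly one maximal proper subset J of the simple affine reflections S^a such that C ∩ W_J ≠ ∅, and C ∩ W_J is a single elliptic W_J-conjugacy class. -/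
set_option maxHeartbeats 1000000
set_option synthInstance.maxHeartbeats 400000

/-!
STATEMENT 16: let `W^a = W ⋉ Q` be an affine Weyl group acting on `E = Q ⊗ ℝ`.
If `C` is an elliptic conjugacy class of `W^a` (elements with a unique, isolated,
fixed point in `E`), then there is exactly one maximal proper subset `J` of the set
`S^a` of simple affine reflections such that `C ∩ W_J ≠ ∅`, and `C ∩ W_J` is a single
elliptic conjugacy class of the (finite, parahoric) group `W_J`.

Formalization: `W^a` is given as a group `Wa` of affine transformations of `E = ℝ^l`
generated by a finite set `Sa` of involutions ("simple affine reflections"), together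
with a fundamental alcove `A₀` — an open set whose closure meets each orbit, with two
points of the closed alcove in the same orbit being equal — such that the stabilizer
of any point of the closed alcove is the standard parabolic ("parahoric") generated by
the simple reflections fixing it, the whole group fixes no point, and each vertex of
the alcove realizes a maximal proper `J` (these are the standard structural facts of
affine Weyl groups).  Maximal proper subsets of `S^a` are the sets `Sa.erase s₀`,
`s₀ ∈ Sa`; `W_J` is `Subgroup.closure J`; ellipticity of an affine transformation
means having a unique fixed point.
-/

open scoped BigOperators Classical

noncomputable section

variable (l : ℕ)

abbrev V (l : ℕ) : Type := Fin l → ℝ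

/-- the parahoric subgroup attached to a set of simple affine reflections. -/
def WJ {l : ℕ} (J : Finset (Equiv.Perm (V l))) : Subgroup (Equiv.Perm (V l)) :=
  Subgroup.closure (J : Set (Equiv.Perm (V l)))

/-- `g` is elliptic: it has a unique (isolated) fixed point in `E`. -/
def IsElliptic {l : ℕ} (g : Equiv.Perm (V l)) : Prop := ∃! v : V l, g v = v


/-!
The conjugates `u g u⁻¹` of an elliptic `g` are the elements whose unique fixed point is `u v`,
`v` being the fixed point of `g`. The parahoric `W_J` attached to a vertex `x` of the closed alcove
is generated by reflections fixing `x`, so a conjugate lying in `W_J` forces `u v = x`.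
Existence: move `v` into the closed alcove; its stabilizer is a parahoric, proper because `Wa`
fixes no point, hence contained in a maximal one. Uniqueness: two such vertices lie in one
`Wa`-orbit, which meets the closed alcove only once. Single class: if `u₁ v = u₂ v = x`, then
`u₂ u₁⁻¹` stabilizes `x`, so it lies in `W_J` and conjugates one element to the other.
-/

open Equiv

theorem Equiv.Perm.conj_apply_eq_self_iff {α : Type*} {g : Perm α} {v : α}
    (hv : ∀ y, g y = y ↔ y = v) (u : Perm α) (y : α) : (u * g * u⁻¹) y = y ↔ y = u v := by
  rw [Perm.mul_apply, Perm.mul_apply, ← Perm.eq_inv_iff_eq, hv, Perm.inv_eq_iff_eq, eq_comm]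

theorem isElliptic_iff {l : ℕ} {g : Perm (V l)} :
    IsElliptic g ↔ ∃ v, ∀ y, g y = y ↔ y = v :=
  ⟨fun ⟨v, hv, hvu⟩ => ⟨v, fun y => ⟨hvu y, fun h => h ▸ hv⟩⟩,
    fun ⟨v, hv⟩ => ⟨v, (hv v).2 rfl, fun y => (hv y).1⟩⟩

theorem isElliptic_conj {l : ℕ} {g : Perm (V l)} (hg : IsElliptic g) (u : Perm (V l)) :
    IsElliptic (u * g * u⁻¹) := by
  obtain ⟨v, hv⟩ := isElliptic_iff.1 hg
  exact isElliptic_iff.2 ⟨u v, Perm.conj_apply_eq_self_iff hv u⟩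

section FundamentalDomain

variable {α : Type*}

theorem exists_mem_apply_ne_of_closure_eq {S : Finset (Perm α)} {H : Subgroup (Perm α)}
    (hgen : Subgroup.closure (S : Set (Perm α)) = H) {x : α} (hx : ∃ w ∈ H, w x ≠ x) :
    ∃ s ∈ S, s x ≠ x := by
  by_contra! hfix
  obtain ⟨w, hw, hwx⟩ := hx
  have hle : H ≤ MulAction.stabilizer (Perm α) x := hgen ▸ (Subgroup.closure_le _).2 hfix
  exact hwx (hle hw)

theorem apply_eq_self_of_mem_closure_filter [DecidableEq α] {S : Finset (Perm α)} {x : α}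
    {h : Perm α} (hh : h ∈ Subgroup.closure (S.filter (fun s => s x = x) : Set (Perm α))) :
    h x = x := by
  have hle : Subgroup.closure (S.filter (fun s => s x = x) : Set (Perm α)) ≤
      MulAction.stabilizer (Perm α) x :=
    (Subgroup.closure_le _).2 fun s hs => (Finset.mem_filter.1 hs).2
  exact hle hh

theorem apply_eq_of_conj_mem_closure_filter [DecidableEq α] {S : Finset (Perm α)}
    {g u : Perm α} {v x : α} (hv : ∀ y, g y = y ↔ y = v)
    (hconj : u * g * u⁻¹ ∈ Subgroup.closure (S.filter (fun s => s x = x) : Set (Perm α))) :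
    u v = x :=
  ((Perm.conj_apply_eq_self_iff hv u x).1 (apply_eq_self_of_mem_closure_filter hconj)).symm

variable {Wa : Subgroup (Perm α)} {Sa : Finset (Perm α)} {D : Set α}

theorem apply_eq_apply_of_apply_mem (hsep : ∀ g ∈ Wa, ∀ x ∈ D, g x ∈ D → g x = x)
    {u₁ u₂ : Perm α} (hu₁ : u₁ ∈ Wa) (hu₂ : u₂ ∈ Wa) {y : α} (hy₁ : u₁ y ∈ D)
    (hy₂ : u₂ y ∈ D) : u₁ y = u₂ y := by
  have h := hsep (u₂ * u₁⁻¹) (mul_mem hu₂ (inv_mem hu₁)) (u₁ y) hy₁ (by simpa using hy₂)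
  simpa using h.symm

theorem eq_of_conj_mem_closure_filter [DecidableEq α]
    (hsep : ∀ g ∈ Wa, ∀ x ∈ D, g x ∈ D → g x = x) {g : Perm α} {v : α}
    (hv : ∀ y, g y = y ↔ y = v) {x₁ x₂ : α} (hx₁ : x₁ ∈ D) (hx₂ : x₂ ∈ D)
    {u₁ u₂ : Perm α} (hu₁ : u₁ ∈ Wa) (hu₂ : u₂ ∈ Wa)
    (h₁ : u₁ * g * u₁⁻¹ ∈ Subgroup.closure (Sa.filter (fun s => s x₁ = x₁) : Set (Perm α)))
    (h₂ : u₂ * g * u₂⁻¹ ∈ Subgroup.closure (Sa.filter (fun s => s x₂ = x₂) : Set (Perm α))) :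
    x₁ = x₂ := by
  have hv₁ : u₁ v = x₁ := apply_eq_of_conj_mem_closure_filter hv h₁
  have hv₂ : u₂ v = x₂ := apply_eq_of_conj_mem_closure_filter hv h₂
  rw [← hv₁, ← hv₂]
  exact apply_eq_apply_of_apply_mem hsep hu₁ hu₂ (hv₁ ▸ hx₁) (hv₂ ▸ hx₂)

variable [DecidableEq α] (hstab : ∀ x ∈ D, ∀ g ∈ Wa, g x = x →
    g ∈ Subgroup.closure (Sa.filter (fun s => s x = x) : Set (Perm α)))
include hstab

theorem exists_conj_mem_closure_erase (hgen : Subgroup.closure (Sa : Set (Perm α)) = Wa)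
    (hfund : ∀ x, ∃ g ∈ Wa, g x ∈ D) (hnofix : ∀ x, ∃ g ∈ Wa, g x ≠ x)
    {g : Perm α} (hg : g ∈ Wa) {v : α} (hv : g v = v) :
    ∃ s₀ ∈ Sa, ∃ u ∈ Wa, u * g * u⁻¹ ∈ Subgroup.closure (Sa.erase s₀ : Set (Perm α)) := by
  obtain ⟨u, hu, hux⟩ := hfund v
  obtain ⟨s₀, hs₀, hs₀x⟩ := exists_mem_apply_ne_of_closure_eq hgen (hnofix (u v))
  have hconj := hstab _ hux (u * g * u⁻¹) (mul_mem (mul_mem hu hg) (inv_mem hu)) (by simp [hv])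
  have hsub : (Sa.filter (fun s => s (u v) = u v) : Set (Perm α)) ⊆ Sa.erase s₀ := by
    intro s hs
    obtain ⟨hsSa, hsx⟩ := Finset.mem_filter.1 hs
    exact Finset.mem_erase.2 ⟨fun h => hs₀x (h ▸ hsx), hsSa⟩
  exact ⟨s₀, hs₀, u, hu, Subgroup.closure_mono hsub hconj⟩

theorem exists_conj_eq_of_conj_mem_closure_filter {g : Perm α} {v : α}
    (hv : ∀ y, g y = y ↔ y = v) {x : α} (hx : x ∈ D) {u₁ u₂ : Perm α} (hu₁ : u₁ ∈ Wa)
    (hu₂ : u₂ ∈ Wa)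
    (h₁ : u₁ * g * u₁⁻¹ ∈ Subgroup.closure (Sa.filter (fun s => s x = x) : Set (Perm α)))
    (h₂ : u₂ * g * u₂⁻¹ ∈ Subgroup.closure (Sa.filter (fun s => s x = x) : Set (Perm α))) :
    ∃ w ∈ Subgroup.closure (Sa.filter (fun s => s x = x) : Set (Perm α)),
      w * (u₁ * g * u₁⁻¹) * w⁻¹ = u₂ * g * u₂⁻¹ := by
  have hfix : (u₂ * u₁⁻¹) x = x := by
    have hx₁ := apply_eq_of_conj_mem_closure_filter hv h₁
    have hx₂ := apply_eq_of_conj_mem_closure_filter hv h₂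
    rw [← hx₁, Perm.mul_apply, Perm.coe_inv, symm_apply_apply, hx₁, hx₂]
  refine ⟨u₂ * u₁⁻¹, hstab x hx _ (mul_mem hu₂ (inv_mem hu₁)) hfix, ?_⟩
  group

end FundamentalDomain

theorem statement16_general (l : ℕ)
    (Wa : Subgroup (Equiv.Perm (V l)))
    (Sa : Finset (Equiv.Perm (V l)))
    -- the simple affine reflections generate Wa and are involutions
    (hgen : Subgroup.closure (Sa : Set (Equiv.Perm (V l))) = Wa)
    -- the fundamental alcove and its standard properties:
    (A₀ : Set (V l))
    (hfund : ∀ x : V l, ∃ g ∈ Wa, g x ∈ closure A₀)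
    (hsep : ∀ g ∈ Wa, ∀ x ∈ closure A₀, g x ∈ closure A₀ → g x = x)
    -- the stabilizer of a point of the closed alcove is the parahoric subgroup
    -- generated by the simple reflections fixing it
    (hstab : ∀ x ∈ closure A₀, ∀ g : Equiv.Perm (V l),
        g ∈ WJ (Sa.filter (fun s => s x = x)) ↔ (g ∈ Wa ∧ g x = x))
    -- Wa fixes no point of E (it contains translations)
    (hnofix : ∀ x : V l, ∃ g ∈ Wa, g x ≠ x)
    -- each vertex of the closed alcove realizes a maximal proper subset of Sa
    (hvertex : ∀ s₀ ∈ Sa, ∃ v ∈ closure A₀,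
        Sa.filter (fun s => s v = v) = Sa.erase s₀)
    -- let g be an elliptic element of Wa, with conjugacy class C
    (g : Equiv.Perm (V l)) (hg : g ∈ Wa) (hell : IsElliptic g) :
    -- there is one and only one maximal proper subset J = Sa.erase s₀ of Sa
    -- such that C ∩ W_J ≠ ∅ …
    (∃! J : Finset (Equiv.Perm (V l)),
        (∃ s₀ ∈ Sa, J = Sa.erase s₀) ∧
        ∃ h ∈ WJ J, ∃ u ∈ Wa, u * g * u⁻¹ = h) ∧
    -- … and for any such J, the intersection C ∩ W_J is a single elliptic
    -- W_J-conjugacy class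
    (∀ J : Finset (Equiv.Perm (V l)), (∃ s₀ ∈ Sa, J = Sa.erase s₀) →
      (∀ h ∈ WJ J, (∃ u ∈ Wa, u * g * u⁻¹ = h) → IsElliptic h) ∧
      (∀ h ∈ WJ J, ∀ h' ∈ WJ J,
        (∃ u ∈ Wa, u * g * u⁻¹ = h) → (∃ u ∈ Wa, u * g * u⁻¹ = h') →
        ∃ w ∈ WJ J, w * h * w⁻¹ = h')) := by
  obtain ⟨v, hfix⟩ := isElliptic_iff.1 hell
  have hstab' := fun x hx g hg hgx => (hstab x hx g).2 ⟨hg, hgx⟩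
  have herase_eq : ∀ s₁ ∈ Sa, ∀ s₂ ∈ Sa, ∀ u₁ ∈ Wa, ∀ u₂ ∈ Wa,
      u₁ * g * u₁⁻¹ ∈ WJ (Sa.erase s₁) → u₂ * g * u₂⁻¹ ∈ WJ (Sa.erase s₂) →
      Sa.erase s₁ = Sa.erase s₂ := by
    intro s₁ hs₁ s₂ hs₂ u₁ hu₁ u₂ hu₂ h₁ h₂
    obtain ⟨x₁, hx₁, hJ₁⟩ := hvertex s₁ hs₁
    obtain ⟨x₂, hx₂, hJ₂⟩ := hvertex s₂ hs₂
    rw [← hJ₁, ← hJ₂, eq_of_conj_mem_closure_filter hsep hfix hx₁ hx₂ hu₁ hu₂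
      (hJ₁ ▸ h₁) (hJ₂ ▸ h₂)]
  obtain ⟨s₀, hs₀, u, hu, hconj⟩ :=
    exists_conj_mem_closure_erase hstab' hgen hfund hnofix hg ((hfix v).2 rfl)
  refine ⟨⟨Sa.erase s₀, ⟨⟨s₀, hs₀, rfl⟩, _, hconj, u, hu, rfl⟩, ?_⟩, ?_⟩
  · rintro J ⟨⟨s₁, hs₁, rfl⟩, _, h₁, u₁, hu₁, rfl⟩
    exact herase_eq s₁ hs₁ s₀ hs₀ u₁ hu₁ u hu h₁ hconj
  · rintro J ⟨s₁, hs₁, rfl⟩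
    refine ⟨fun _ _ ⟨u₁, _, hh⟩ => hh ▸ isElliptic_conj hell u₁, ?_⟩
    rintro _ h₁ _ h₂ ⟨u₁, hu₁, rfl⟩ ⟨u₂, hu₂, rfl⟩
    obtain ⟨x, hx, hJ⟩ := hvertex s₁ hs₁
    rw [← hJ] at h₁ h₂ ⊢
    exact exists_conj_eq_of_conj_mem_closure_filter hstab' hfix hx hu₁ hu₂ h₁ h₂

theorem statement16 (l : ℕ)
    (Wa : Subgroup (Equiv.Perm (V l)))
    (Sa : Finset (Equiv.Perm (V l)))
    -- the simple affine reflections generate Wa and are involutions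
    (hSa : ∀ s ∈ Sa, s ∈ Wa) (hgen : Subgroup.closure (Sa : Set (Equiv.Perm (V l))) = Wa)
    (hinv : ∀ s ∈ Sa, s * s = 1 ∧ s ≠ 1)
    -- every element of Wa is an affine transformation
    (haff : ∀ g ∈ Wa, ∃ (A : (V l) →ₗ[ℝ] (V l)) (b : V l), ∀ x, g x = A x + b)
    -- the fundamental alcove and its standard properties:
    (A₀ : Set (V l)) (hopen : IsOpen A₀) (hne : A₀.Nonempty)
    (hfund : ∀ x : V l, ∃ g ∈ Wa, g x ∈ closure A₀)
    (hsep : ∀ g ∈ Wa, ∀ x ∈ closure A₀, g x ∈ closure A₀ → g x = x)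
    -- the stabilizer of a point of the closed alcove is the parahoric subgroup
    -- generated by the simple reflections fixing it
    (hstab : ∀ x ∈ closure A₀, ∀ g : Equiv.Perm (V l),
        g ∈ WJ (Sa.filter (fun s => s x = x)) ↔ (g ∈ Wa ∧ g x = x))
    -- Wa fixes no point of E (it contains translations)
    (hnofix : ∀ x : V l, ∃ g ∈ Wa, g x ≠ x)
    -- each vertex of the closed alcove realizes a maximal proper subset of Sa
    (hvertex : ∀ s₀ ∈ Sa, ∃ v ∈ closure A₀,
        Sa.filter (fun s => s v = v) = Sa.erase s₀)
    -- let g be an elliptic element of Wa, with conjugacy class C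
    (g : Equiv.Perm (V l)) (hg : g ∈ Wa) (hell : IsElliptic g) :
    -- there is one and only one maximal proper subset J = Sa.erase s₀ of Sa
    -- such that C ∩ W_J ≠ ∅ …
    (∃! J : Finset (Equiv.Perm (V l)),
        (∃ s₀ ∈ Sa, J = Sa.erase s₀) ∧
        ∃ h ∈ WJ J, ∃ u ∈ Wa, u * g * u⁻¹ = h) ∧
    -- … and for any such J, the intersection C ∩ W_J is a single elliptic
    -- W_J-conjugacy class
    (∀ J : Finset (Equiv.Perm (V l)), (∃ s₀ ∈ Sa, J = Sa.erase s₀) →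
      (∀ h ∈ WJ J, (∃ u ∈ Wa, u * g * u⁻¹ = h) → IsElliptic h) ∧
      (∀ h ∈ WJ J, ∀ h' ∈ WJ J,
        (∃ u ∈ Wa, u * g * u⁻¹ = h) → (∃ u ∈ Wa, u * g * u⁻¹ = h') →
        ∃ w ∈ WJ J, w * h * w⁻¹ = h')) :=
  statement16_general l Wa Sa hgen A₀ hfund hsep hstab hnofix hvertex g hg hell
end
end

section
/- Under the isomorphism between the elliptic space of W(B_n) and R(S_n) (sending σ_λ to [λ×∅]), the elliptic fake degree satisfies F^{B_n}_{[λ×∅]} = (q-1)^n · ⟨σ_λ, c_q⟩_{S_n}, where c_q is the class function on S_n given by c_q(α) = 1/Π_{i}(1+q^{α_i}) for a permutation of cycle type α; moreover c_q equals the character of the graded representation S_{q²}(E_n) ⊗ Λ_{-q}(E_n) of S_n. -/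
set_option maxHeartbeats 1000000
set_option synthInstance.maxHeartbeats 400000

/-!
STATEMENT 19: the elliptic fake degree of `[λ×∅]` in `W(B_n)` satisfies
`F^{B_n}_{[λ×∅]} = (q-1)^n ⟨σ_λ, c_q⟩_{S_n}` where `c_q` is the class function on
`S_n` with `c_q(α) = Π_i (1+q^{α_i})⁻¹` on cycle type `α`; moreover `c_q` equals the
character of the graded representation `S_{q²}(E_n) ⊗ Λ_{-q}(E_n)`, i.e.
`c_q(w) = det(1 - q·w)/det(1 - q²·w)` on the permutation representation `E_n`.
-/

open scoped BigOperators Classical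

noncomputable section

/-- the multiset of fiber sizes of `f : Fin n → ℕ` (over the image of `f`). -/
def fiberSizes (n : ℕ) (f : Fin n → ℕ) : Multiset ℕ :=
  (Finset.univ.image f).val.map (fun j => (Finset.univ.filter (fun i => f i = j)).card)

/-- the Young subgroup of `S_n` preserving the fibers of `f`. -/
def youngSubgroup (n : ℕ) (f : Fin n → ℕ) : Subgroup (Equiv.Perm (Fin n)) where
  carrier := {w | ∀ i, f (w i) = f i}
  one_mem' := by intro i; rfl
  mul_mem' := by
    intro a b ha hb i
    simpa [Equiv.Perm.mul_apply] using (ha (b i)).trans (hb i)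
  inv_mem' := by
    intro a ha i
    simpa using (ha (a⁻¹ i)).symm

/-- the function on `G` induced from `φ` on the subgroup `H`. -/
def indCF {G : Type} [Group G] [Fintype G] (H : Subgroup G) (φ : G → ℚ) : G → ℚ :=
  fun w => ((Nat.card H : ℚ))⁻¹ *
    ∑ g : G, if g⁻¹ * w * g ∈ H then φ (g⁻¹ * w * g) else 0

/-- the standard character pairing on `S_n` (characters here are real valued). -/
def pairS (n : ℕ) (a b : Equiv.Perm (Fin n) → ℚ) : ℚ :=
  ((n.factorial : ℚ))⁻¹ * ∑ w : Equiv.Perm (Fin n), a w * b w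

/-- the multiset of parts of the conjugate (transposed) partition. -/
def conjParts (n : ℕ) (m : Multiset ℕ) : Multiset ℕ :=
  ((Finset.range n).val.map (fun j => Multiset.card (m.filter (fun a => j < a)))).filter
    (fun a => 0 < a)

/-- `χ` is (the character of) the irreducible representation `σ_λ` of `S_n` attached to
the partition with parts `lam` and conjugate-partition parts `lamT`: it is a genuine
character, has norm one (so is irreducible), and is a common constituent of
`Ind_{S_λ} 1` and `Ind_{S_{λᵗ}} sgn` — which characterizes `σ_λ`. -/
def IsIrrCharOf (n : ℕ) (lam lamT : Multiset ℕ) (χ : Equiv.Perm (Fin n) → ℤ) : Prop :=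
  (∃ V : FDRep ℂ (Equiv.Perm (Fin n)), ∀ g, V.character g = (χ g : ℂ)) ∧
  pairS n (fun w => (χ w : ℚ)) (fun w => (χ w : ℚ)) = 1 ∧
  (∀ f : Fin n → ℕ, fiberSizes n f = lam →
      pairS n (fun w => (χ w : ℚ)) (indCF (youngSubgroup n f) (fun _ => 1)) ≠ 0) ∧
  (∀ f : Fin n → ℕ, fiberSizes n f = lamT →
      pairS n (fun w => (χ w : ℚ))
        (indCF (youngSubgroup n f) (fun w => ((Equiv.Perm.sign w : ℤ) : ℚ))) ≠ 0)

/-- the signed permutation matrix of `p ∈ W(B_n)`, over `K = ℚ(q)`. -/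
def BMat (n : ℕ) (p : BElt n) : Matrix (Fin n) (Fin n) K :=
  Matrix.of fun i j => if p.1 j = i then (if p.2 j then -1 else 1) else 0

/-- the permutation matrix of `w` on the permutation representation `E_n = K^n`. -/
def permM (n : ℕ) (w : Equiv.Perm (Fin n)) : Matrix (Fin n) (Fin n) K :=
  Matrix.of fun i j => if w j = i then 1 else 0

/-- the class function `c_q` on `S_n`: `c_q(w) = Π_i (1+q^{α_i})⁻¹` where `α` is the
cycle type of `w` (fixed points included). -/
def cq (n : ℕ) (w : Equiv.Perm (Fin n)) : K :=
  (((Equiv.Perm.partition w).parts).map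
    (fun a => ((1 : K) + (RatFunc.X : K) ^ a)⁻¹)).prod


instance : CharZero K := charZero_of_injective_algebraMap (algebraMap ℚ K).injective

namespace S19

variable {R : Type} [CommRing R]

/-- sign of a boolean. -/
def sg {R : Type} [CommRing R] (b : Bool) : R := if b then -1 else 1

lemma fin_add_one_eq_zero_iff {k : ℕ} {j : Fin (k+2)} : j + 1 = 0 ↔ j = Fin.last (k+1) := by
  rw [Fin.ext_iff, Fin.ext_iff, Fin.val_add, Fin.val_one, Fin.val_zero, Fin.val_last]
  have hj := j.isLt
  constructor
  · intro h
    by_cases hl : (j : ℕ) = k + 1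
    · exact hl
    · rw [Nat.mod_eq_of_lt (by omega)] at h; omega
  · intro h; rw [h, Nat.mod_self]

lemma fin_add_one_ne {k : ℕ} (x : Fin (k+2)) : x + 1 ≠ x := by
  intro h
  have h' := congrArg Fin.val h
  rw [Fin.val_add, Fin.val_one] at h'
  have hx := x.isLt
  by_cases hl : (x : ℕ) = k + 1
  · rw [hl, Nat.mod_self] at h'; omega
  · rw [Nat.mod_eq_of_lt (by omega)] at h'; omega

/-- Determinant of `1 - (cyclic shift with weights)`. -/
lemma det_circ (m : ℕ) (u : Fin (m+1) → R) :
    Matrix.det (Matrix.of fun i j : Fin (m+1) =>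
      (if i = j then (1:R) else 0) - (if j + 1 = i then u j else 0))
    = 1 - ∏ j, u j := by
  induction m with
  | zero =>
      rw [Matrix.det_fin_one]
      simp [Matrix.of_apply]
  | succ k _ =>
      set A : Matrix (Fin (k+2)) (Fin (k+2)) R := Matrix.of fun i j =>
        (if i = j then (1:R) else 0) - (if j + 1 = i then u j else 0) with hA
      have h0last : (0 : Fin (k+2)) ≠ Fin.last (k+1) := by
        simp [Fin.ext_iff, Fin.last]
      have hA00 : A 0 0 = 1 := by
        have : ¬ ((0 : Fin (k+2)) + 1 = 0) := by
          rw [fin_add_one_eq_zero_iff]; exact h0last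
        simp [hA, this]
      have hA0last : A 0 (Fin.last (k+1)) = - u (Fin.last (k+1)) := by
        have h1 : (Fin.last (k+1) : Fin (k+2)) + 1 = 0 := fin_add_one_eq_zero_iff.mpr rfl
        simp [hA, h1, h0last]
      have hA0other : ∀ j : Fin (k+2), j ≠ 0 → j ≠ Fin.last (k+1) → A 0 j = 0 := by
        intro j hj0 hjl
        have h1 : ¬ (j + 1 = 0) := by rw [fin_add_one_eq_zero_iff]; exact hjl
        have h2 : (0 : Fin (k+2)) ≠ j := fun h => hj0 h.symm
        simp [hA, h1, h2]
      rw [Matrix.det_succ_row_zero]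
      have hsub : ∀ j : Fin (k+2), j ∉ ({0, Fin.last (k+1)} : Finset (Fin (k+2))) →
          (-1 : R) ^ (j : ℕ) * A 0 j * (A.submatrix Fin.succ j.succAbove).det = 0 := by
        intro j hj
        simp only [Finset.mem_insert, Finset.mem_singleton, not_or] at hj
        rw [hA0other j hj.1 hj.2, mul_zero, zero_mul]
      rw [← Finset.sum_subset (Finset.subset_univ ({0, Fin.last (k+1)} : Finset (Fin (k+2))))
        (fun x _ hx => hsub x hx)]
      rw [Finset.sum_pair h0last]
      -- minor at (0,0) : lower triangular with unit diagonal
      have hdet1 : (A.submatrix Fin.succ ((0 : Fin (k+2)).succAbove)).det = 1 := by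
        rw [Fin.succAbove_zero]
        have htri : (A.submatrix Fin.succ Fin.succ).BlockTriangular OrderDual.toDual := by
          intro i j hij
          have hij' : (i : ℕ) < (j : ℕ) := hij
          have h1 : i.succ ≠ j.succ := by
            simp only [ne_eq, Fin.succ_inj]; exact Fin.ne_of_lt hij
          have h2 : ¬ (j.succ + 1 = i.succ) := by
            intro h
            rcases eq_or_ne j.succ (Fin.last (k+1)) with hl | hl
            · rw [fin_add_one_eq_zero_iff.mpr hl] at h
              exact (Fin.succ_ne_zero i) h.symm
            · have hv := Fin.val_add_one j.succ
              rw [if_neg hl] at hv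
              have h' := congrArg Fin.val h
              rw [hv, Fin.val_succ, Fin.val_succ] at h'
              omega
          simp [hA, h1, h2]
        rw [Matrix.det_of_lowerTriangular _ htri]
        apply Finset.prod_eq_one
        intro i _
        have : ¬ (i.succ + 1 = i.succ) := fin_add_one_ne _
        simp [hA, this]
      -- minor at (0,last) : upper triangular with diagonal -u
      have hcast : ∀ j : Fin (k+1), j.castSucc + 1 = j.succ := by
        intro j
        have hne : j.castSucc ≠ Fin.last (k+1) := by
          intro h
          have h' := congrArg Fin.val h
          rw [Fin.coe_castSucc, Fin.val_last] at h'
          have := j.isLt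
          omega
        have hv := Fin.val_add_one j.castSucc
        rw [if_neg hne] at hv
        exact Fin.ext (by rw [hv]; simp [Fin.val_succ])
      have hdet2 : (A.submatrix Fin.succ ((Fin.last (k+1)).succAbove)).det
          = ∏ i : Fin (k+1), (- u i.castSucc) := by
        rw [Fin.succAbove_last]
        have htri : (A.submatrix Fin.succ Fin.castSucc).BlockTriangular id := by
          intro i j hij
          have hij' : (j : ℕ) < (i : ℕ) := hij
          have h1 : i.succ ≠ j.castSucc := by
            intro h; have := congrArg Fin.val h; simp [Fin.val_succ] at this; omega
          have h2 : ¬ (j.castSucc + 1 = i.succ) := by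
            rw [hcast j]
            intro h; have := congrArg Fin.val h; simp [Fin.val_succ] at this; omega
          simp only [Matrix.submatrix_apply, hA, Matrix.of_apply]
          rw [if_neg h1, if_neg h2, sub_zero]
        rw [Matrix.det_of_upperTriangular htri]
        apply Finset.prod_congr rfl
        intro i _
        have h1 : i.succ ≠ i.castSucc := by
          intro h; have := congrArg Fin.val h; simp [Fin.val_succ] at this
        simp only [Matrix.submatrix_apply, hA, Matrix.of_apply]
        rw [if_neg h1, hcast i, if_pos rfl, zero_sub]
      rw [hA00, hdet1, hA0last, hdet2]
      have hprodneg : ∏ i : Fin (k+1), (- u i.castSucc)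
          = (-1:R)^(k+1) * ∏ i : Fin (k+1), u i.castSucc := by
        calc ∏ i : Fin (k+1), (-u i.castSucc)
            = ∏ i : Fin (k+1), ((-1) * u i.castSucc) := by
              apply Finset.prod_congr rfl; intro i _; ring
          _ = (∏ _i : Fin (k+1), (-1:R)) * ∏ i : Fin (k+1), u i.castSucc :=
              Finset.prod_mul_distrib
          _ = _ := by rw [Finset.prod_const]; simp
      rw [hprodneg, Fin.prod_univ_castSucc (f := u)]
      have hlv : ((Fin.last (k+1) : Fin (k+2)) : ℕ) = k+1 := rfl
      have h0v : (((0 : Fin (k+2))) : ℕ) = 0 := rfl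
      rw [hlv, h0v]
      have hm1 : (-1:R)^(k+1) * (-1:R)^(k+1) = 1 := by
        rw [← pow_add]
        exact Even.neg_one_pow ⟨k+1, by ring⟩
      linear_combination (-(u (Fin.last (k+1)) * ∏ i : Fin (k+1), u i.castSucc)) * hm1


variable {ι : Type} [Fintype ι] [DecidableEq ι]

/-- `1 - t * (signed permutation matrix)`. -/
def PM (t : R) (w : Equiv.Perm ι) (s : ι → Bool) : Matrix ι ι R :=
  Matrix.of fun i j => (if i = j then (1:R) else 0) - t * (if w j = i then sg (s j) else 0)

lemma det_PM_block (t : R) (w : Equiv.Perm ι) (s : ι → Bool) (p : ι → Prop)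
    [DecidablePred p] (hS : ∀ j, p (w j) ↔ p j) :
    (PM t w s).det = ((PM t w s).toSquareBlockProp p).det *
      ((PM t w s).toSquareBlockProp (fun i => ¬ p i)).det := by
  apply Matrix.twoBlockTriangular_det
  intro i hi j hj
  have h1 : ¬ (i = j) := fun h => hi (h ▸ hj)
  have h2 : ¬ (w j = i) := fun h => hi (h ▸ (hS j).mpr hj)
  simp [PM, h1, h2]

lemma det_PM_fixed (t : R) (w : Equiv.Perm ι) (s : ι → Bool) (p : ι → Prop)
    [DecidablePred p] (hfix : ∀ i, p i → w i = i) :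
    ((PM t w s).toSquareBlockProp p).det = ∏ i ∈ Finset.univ.filter p, (1 - sg (s i) * t) := by
  have hdiag : (PM t w s).toSquareBlockProp p =
      Matrix.diagonal (fun i : {a // p a} => 1 - sg (s i.1) * t) := by
    ext ⟨i, hi⟩ ⟨j, hj⟩
    by_cases h : i = j
    · subst h
      simp [Matrix.toSquareBlockProp, PM, Matrix.diagonal, hfix i hi]
      ring
    · have h2 : ¬ (w j = i) := by rw [hfix j hj]; exact fun hh => h hh.symm
      have h3 : (⟨i, hi⟩ : {a // p a}) ≠ ⟨j, hj⟩ := by simp [Subtype.ext_iff, h]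
      simp [Matrix.toSquareBlockProp, PM, Matrix.diagonal, h, h2, h3]
  rw [hdiag, Matrix.det_diagonal]
  exact (Finset.prod_subtype (Finset.univ.filter p) (fun x => by simp)
    (fun i => 1 - sg (s i) * t)).symm

lemma toSquareBlockProp_congr (t : R) (w w' : Equiv.Perm ι) (s : ι → Bool) (p : ι → Prop)
    [DecidablePred p] (h : ∀ j, p j → w j = w' j) :
    (PM t w s).toSquareBlockProp p = (PM t w' s).toSquareBlockProp p := by
  ext ⟨i,hi⟩ ⟨j,hj⟩
  simp [Matrix.toSquareBlockProp, PM, h j hj]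

lemma det_PM_cycleBlock (t : R) (c : Equiv.Perm ι) (hc : c.IsCycle) (s : ι → Bool)
    (p : ι → Prop) [DecidablePred p] (hp : ∀ x, p x ↔ x ∈ c.support) :
    ((PM t c s).toSquareBlockProp p).det
      = 1 - (∏ i ∈ c.support, sg (s i)) * t ^ c.support.card := by
  obtain ⟨m', hm⟩ : ∃ m', c.support.card = m' + 1 :=
    ⟨c.support.card - 1, by have := hc.two_le_card_support; omega⟩
  obtain ⟨x₀, hx₀⟩ : ∃ x, x ∈ c.support :=
    Finset.card_pos.mp (by omega)
  have horder : orderOf c = c.support.card := hc.orderOf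
  have hmem : ∀ k : ℕ, (c ^ k) x₀ ∈ c.support :=
    fun k => Equiv.Perm.pow_apply_mem_support.mpr hx₀
  set φ : Fin (m'+1) → {a // p a} := fun k => ⟨(c ^ (k:ℕ)) x₀, (hp _).mpr (hmem _)⟩ with hφ
  have hco : c.IsCycleOn (c.support : Set ι) := by
    rw [Equiv.Perm.coe_support_eq_set_support]; exact hc.isCycleOn
  have key : ∀ a b : ℕ, a ≤ b → b < m'+1 → (c ^ a) x₀ = (c ^ b) x₀ → a = b := by
    intro a b hab hb h
    have h2 : (c ^ (b - a)) ((c ^ a) x₀) = (c ^ a) x₀ := by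
      rw [← Equiv.Perm.mul_apply, ← pow_add]
      rw [Nat.sub_add_cancel hab, ← h]
    have h3 := (hco.pow_apply_eq (hmem a)).mp h2
    rw [hm] at h3
    have h4 := Nat.eq_zero_of_dvd_of_lt h3 (by omega)
    omega
  have hinj : Function.Injective φ := by
    intro a b hab
    have h1 : (c ^ (a:ℕ)) x₀ = (c ^ (b:ℕ)) x₀ := congrArg Subtype.val hab
    rcases le_total (a:ℕ) (b:ℕ) with hle | hle
    · exact Fin.ext (key _ _ hle b.isLt h1)
    · exact (Fin.ext (key _ _ hle a.isLt h1.symm)).symm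
  have hbij : Function.Bijective φ :=
    (Fintype.bijective_iff_injective_and_card φ).mpr
      ⟨hinj, by
        rw [Fintype.card_fin, Fintype.card_of_subtype c.support (fun x => (hp x).symm), hm]⟩
  set e : Fin (m'+1) ≃ {a // p a} := Equiv.ofBijective φ hbij with he
  rw [← Matrix.det_submatrix_equiv_self e]
  have hpowmod : ∀ j : ℕ, (c ^ (j % (m'+1))) x₀ = (c ^ j) x₀ := by
    intro j
    conv_rhs => rw [← pow_mod_orderOf]
    rw [horder, hm]
  have hstep : ∀ k' : Fin (m'+1), c ((φ k').1) = (φ (k' + 1)).1 := by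
    intro k'
    show c ((c ^ (k':ℕ)) x₀) = (c ^ (((k' + 1 : Fin (m'+1))):ℕ)) x₀
    have h1 : c ((c ^ (k':ℕ)) x₀) = (c ^ ((k':ℕ)+1)) x₀ := by
      rw [pow_succ']
      simp [Equiv.Perm.mul_apply]
    rw [h1]
    have h2 : (((k' + 1 : Fin (m'+1))):ℕ) = ((k':ℕ) + 1) % (m'+1) := by
      rw [Fin.val_add, Fin.val_one', Nat.add_mod_mod]
    rw [h2, hpowmod]
  have hmat : ((PM t c s).toSquareBlockProp p).submatrix e e
      = Matrix.of fun i j : Fin (m'+1) =>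
        (if i = j then (1:R) else 0) -
          (if j + 1 = i then (t * sg (s ((φ j).1))) else 0) := by
    ext k k'
    show PM t c s ((φ k).1) ((φ k').1) = _
    have hc1 : ((φ k).1 = (φ k').1) ↔ (k = k') := by
      constructor
      · intro h; exact hinj (Subtype.ext h)
      · intro h; rw [h]
    have hc2 : (c ((φ k').1) = (φ k).1) ↔ (k' + 1 = k) := by
      rw [hstep k']
      constructor
      · intro h; exact hinj (Subtype.ext h)
      · intro h; rw [h]
    simp only [PM, Matrix.of_apply]
    rw [mul_ite, mul_zero]
    congr 1
    · simp [hc1]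
    · simp only [hc2]
  rw [hmat, det_circ]
  have hprod : ∏ j : Fin (m'+1), (t * sg (s ((φ j).1)))
      = (∏ j : Fin (m'+1), sg (s ((φ j).1))) * t ^ (m'+1) := by
    rw [Finset.prod_mul_distrib, Finset.prod_const, Finset.card_univ, Fintype.card_fin]
    ring
  have hsgprod : ∏ j : Fin (m'+1), (sg (s ((φ j).1)) : R) = ∏ i ∈ c.support, (sg (s i) : R) := by
    have h1 : ∏ j : Fin (m'+1), (sg (s ((φ j).1)) : R) = ∏ x : {a // p a}, (sg (s x.1) : R) :=
      Fintype.prod_bijective φ hbij (fun j => sg (s ((φ j).1))) (fun x => sg (s x.1))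
        (fun x => rfl)
    have h2 : ∏ i ∈ c.support, (sg (s i) : R) = ∏ x : {a // p a}, (sg (s x.1) : R) :=
      Finset.prod_subtype c.support (fun x => (hp x).symm) (fun i => sg (s i))
    rw [h1, h2]
  rw [hprod, hsgprod, hm]

lemma lin_ne_zero (b : Bool) : (1 - sg b * Polynomial.X : Polynomial ℤ) ≠ 0 := by
  intro h
  have h' := congrArg (Polynomial.eval 0) h
  cases b <;> simp [sg] at h'

lemma det_PM_poly (w : Equiv.Perm ι) (s : ι → Bool) :
    (PM (Polynomial.X : Polynomial ℤ) w s).det =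
      (∏ c ∈ w.cycleFactorsFinset,
        (1 - (∏ i ∈ c.support, sg (s i)) * (Polynomial.X : Polynomial ℤ) ^ c.support.card)) *
      ∏ i ∈ Finset.univ \ w.support, (1 - sg (s i) * Polynomial.X) := by
  induction w using Equiv.Perm.cycle_induction_on with
  | base_one =>
      have hdiag : PM (Polynomial.X : Polynomial ℤ) (1 : Equiv.Perm ι) s =
          Matrix.diagonal (fun i => 1 - sg (s i) * Polynomial.X) := by
        ext i j
        by_cases h : i = j
        · subst h; simp [PM, Matrix.diagonal]; ring
        · have h' : ¬ (j = i) := fun hh => h hh.symm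
          simp [PM, Matrix.diagonal, h, h']
      rw [hdiag, Matrix.det_diagonal]
      simp
  | base_cycles σ hσ =>
      rw [det_PM_block _ σ s (· ∈ σ.support)
        (fun j => Equiv.Perm.apply_mem_support)]
      rw [det_PM_cycleBlock _ σ hσ s (· ∈ σ.support) (fun x => Iff.rfl)]
      rw [det_PM_fixed (Polynomial.X : Polynomial ℤ) σ s (fun i => ¬ i ∈ σ.support)
        (fun i hi => Equiv.Perm.notMem_support.mp hi)]
      rw [hσ.cycleFactorsFinset_eq_singleton, Finset.prod_singleton]
      congr 1
      rw [Finset.filter_not, Finset.filter_univ_mem]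
  | induction_disjoint σ τ hd hσ ihσ ihτ =>
      set S := σ.support with hSdef
      have hdS : Disjoint σ.support τ.support := hd.disjoint_support
      have hτfix : ∀ j, j ∈ S → τ j = j := by
        intro j hj
        exact Equiv.Perm.notMem_support.mp (Finset.disjoint_left.mp hdS hj)
      have hτnotS : ∀ j, j ∉ S → τ j ∉ S := by
        intro j hj
        by_cases hjτ : j ∈ τ.support
        · exact Finset.disjoint_right.mp hdS (Equiv.Perm.apply_mem_support.mpr hjτ)
        · rw [Equiv.Perm.notMem_support.mp hjτ]; exact hj
      have hjS : ∀ j, ((σ * τ) j ∈ S) ↔ (j ∈ S) := by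
        intro j
        constructor
        · intro h
          by_contra hj
          have h1 : τ j ∉ S := hτnotS j hj
          have h2 : (σ * τ) j = τ j := by
            rw [Equiv.Perm.mul_apply]
            exact Equiv.Perm.notMem_support.mp h1
          rw [h2] at h; exact h1 h
        · intro hj
          have : (σ * τ) j = σ j := by
            rw [Equiv.Perm.mul_apply, hτfix j hj]
          rw [this]
          exact Equiv.Perm.apply_mem_support.mpr hj
      have hτS : ∀ j, (τ j ∈ S) ↔ (j ∈ S) := by
        intro j
        constructor
        · intro h
          by_contra hj
          exact (hτnotS j hj) h
        · intro hj; rw [hτfix j hj]; exact hj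
      -- block decomposition of σ * τ
      rw [det_PM_block _ (σ * τ) s (· ∈ S) hjS]
      rw [toSquareBlockProp_congr _ (σ * τ) σ s (· ∈ S)
        (fun j hj => by rw [Equiv.Perm.mul_apply, hτfix j hj])]
      rw [toSquareBlockProp_congr _ (σ * τ) τ s (fun i => ¬ i ∈ S)
        (fun j hj => by
          rw [Equiv.Perm.mul_apply]
          exact Equiv.Perm.notMem_support.mp (hτnotS j hj))]
      rw [det_PM_cycleBlock _ σ hσ s (· ∈ S) (fun x => Iff.rfl)]
      -- compute det of the complement block of τ via the full determinant of τ
      have hblockτ := det_PM_block (Polynomial.X : Polynomial ℤ) τ s (· ∈ S) hτS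
      rw [det_PM_fixed (Polynomial.X : Polynomial ℤ) τ s (· ∈ S) hτfix] at hblockτ
      rw [Finset.filter_univ_mem] at hblockτ
      set P2 : Polynomial ℤ := ∏ i ∈ S, (1 - sg (s i) * Polynomial.X) with hP2def
      set B : Polynomial ℤ :=
        ((PM (Polynomial.X : Polynomial ℤ) τ s).toSquareBlockProp (fun i => ¬ i ∈ S)).det
        with hBdef
      have hP2ne : P2 ≠ 0 := by
        rw [hP2def]
        exact Finset.prod_ne_zero_iff.mpr (fun i _ => lin_ne_zero (s i))
      have hCF : (σ * τ).cycleFactorsFinset = {σ} ∪ τ.cycleFactorsFinset := by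
        rw [hd.cycleFactorsFinset_mul_eq_union, hσ.cycleFactorsFinset_eq_singleton]
      have hσnotin : σ ∉ τ.cycleFactorsFinset := by
        intro hmem
        obtain ⟨x, hx1, -⟩ := hσ
        have hx : x ∈ σ.support := Equiv.Perm.mem_support.mpr hx1
        have h1 : σ x = τ x := (Equiv.Perm.mem_cycleFactorsFinset_iff.mp hmem).2 x hx
        have h2 : τ x ≠ x := by
          rw [← h1]; exact hx1
        have h3 : x ∈ τ.support := Equiv.Perm.mem_support.mpr h2
        exact Finset.disjoint_left.mp hdS hx h3
      have hsupp : (σ * τ).support = S ∪ τ.support := hd.support_mul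
      have hsdiff : (Finset.univ \ τ.support) = S ∪ (Finset.univ \ (S ∪ τ.support)) := by
        ext x
        simp only [Finset.mem_sdiff, Finset.mem_union, Finset.mem_univ, true_and]
        by_cases hx : x ∈ S
        · simp [hx]
          exact Equiv.Perm.notMem_support.mp (Finset.disjoint_left.mp hdS hx)
        · simp [hx]
      have hdisj2 : Disjoint S (Finset.univ \ (S ∪ τ.support)) := by
        rw [Finset.disjoint_left]
        intro a ha ha2
        rw [Finset.mem_sdiff] at ha2
        exact ha2.2 (Finset.mem_union_left _ ha)
      have hB : B = (∏ c ∈ τ.cycleFactorsFinset,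
          (1 - (∏ i ∈ c.support, sg (s i)) * (Polynomial.X : Polynomial ℤ) ^ c.support.card)) *
          ∏ i ∈ Finset.univ \ (S ∪ τ.support), (1 - sg (s i) * Polynomial.X) := by
        apply mul_left_cancel₀ hP2ne
        rw [← hblockτ, ihτ, hsdiff, Finset.prod_union hdisj2]
        ring
      rw [hB, hCF, Finset.prod_union (Finset.disjoint_singleton_left.mpr hσnotin),
        Finset.prod_singleton, hsupp]
      ring

/-- The determinant of `1 - t·(signed permutation matrix)` over any commutative ring. -/
lemma det_PM_general (t : R) (w : Equiv.Perm ι) (s : ι → Bool) :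
    (PM t w s).det =
      (∏ c ∈ w.cycleFactorsFinset,
        (1 - (∏ i ∈ c.support, sg (s i)) * t ^ c.support.card)) *
      ∏ i ∈ Finset.univ \ w.support, (1 - sg (s i) * t) := by
  set f : Polynomial ℤ →+* R := Polynomial.eval₂RingHom (Int.castRingHom R) t with hf
  have hfX : f Polynomial.X = t := by simp [hf]
  have hfsg : ∀ b : Bool, f (sg b) = sg b := by
    intro b; cases b <;> simp [sg, hf]
  have hmap : (PM (Polynomial.X : Polynomial ℤ) w s).map f = PM t w s := by
    ext i j
    simp only [Matrix.map_apply, PM, Matrix.of_apply]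
    rw [map_sub, map_mul, hfX]
    congr 1
    · split_ifs <;> simp
    · congr 1
      split_ifs <;> simp [hfsg]
  calc (PM t w s).det = ((PM (Polynomial.X : Polynomial ℤ) w s).map f).det := by rw [hmap]
    _ = f (PM (Polynomial.X : Polynomial ℤ) w s).det := (RingHom.map_det f _).symm
    _ = _ := by
        rw [det_PM_poly w s, map_mul, map_prod, map_prod]
        congr 1
        · apply Finset.prod_congr rfl
          intro c _
          rw [map_sub, map_one, map_mul, map_pow, hfX, map_prod]
          congr 2
          exact Finset.prod_congr rfl (fun i _ => hfsg (s i))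
        · apply Finset.prod_congr rfl
          intro i _
          rw [map_sub, map_one, map_mul, hfX, hfsg]


lemma one_sub_X_pow_ne (a : ℕ) (ha : 1 ≤ a) : (1 : K) - (RatFunc.X : K) ^ a ≠ 0 := by
  intro h
  have h2 : algebraMap (Polynomial ℚ) K (1 - Polynomial.X ^ a) = 0 := by
    rw [map_sub, map_one, map_pow, RatFunc.algebraMap_X, h]
  have h3 : (1 - Polynomial.X ^ a : Polynomial ℚ) = 0 :=
    RatFunc.algebraMap_injective ℚ (by rw [h2, map_zero])
  have h4 := congrArg (Polynomial.eval 0) h3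
  simp [zero_pow (by omega : a ≠ 0)] at h4

lemma one_add_X_pow_ne (a : ℕ) (ha : 1 ≤ a) : (1 : K) + (RatFunc.X : K) ^ a ≠ 0 := by
  intro h
  have h2 : algebraMap (Polynomial ℚ) K (1 + Polynomial.X ^ a) = 0 := by
    rw [map_add, map_one, map_pow, RatFunc.algebraMap_X, h]
  have h3 : (1 + Polynomial.X ^ a : Polynomial ℚ) = 0 :=
    RatFunc.algebraMap_injective ℚ (by rw [h2, map_zero])
  have h4 := congrArg (Polynomial.eval 0) h3
  simp [zero_pow (by omega : a ≠ 0)] at h4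

lemma parts_prod (n : ℕ) (w : Equiv.Perm (Fin n)) (g : ℕ → K) :
    ((Equiv.Perm.partition w).parts.map g).prod
      = (∏ c ∈ w.cycleFactorsFinset, g c.support.card) * (g 1) ^ (n - w.support.card) := by
  rw [Equiv.Perm.parts_partition, Multiset.map_add, Multiset.prod_add,
    Multiset.map_replicate, Multiset.prod_replicate]
  congr 1
  · rw [Equiv.Perm.cycleType_def, Multiset.map_map, Finset.prod_eq_multiset_prod]
    rfl
  · congr 2
    rw [Fintype.card_fin]

lemma cq_eq (n : ℕ) (w : Equiv.Perm (Fin n)) :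
    cq n w = (∏ c ∈ w.cycleFactorsFinset, ((1:K) + (RatFunc.X : K) ^ c.support.card)⁻¹) *
      (((1:K) + (RatFunc.X : K))⁻¹) ^ (n - w.support.card) := by
  rw [cq, parts_prod n w (fun a => ((1:K) + (RatFunc.X : K) ^ a)⁻¹)]
  rw [pow_one]

lemma det_one_sub_smul_perm (n : ℕ) (t : K) (w : Equiv.Perm (Fin n)) :
    Matrix.det ((1 : Matrix (Fin n) (Fin n) K) - t • permM n w)
      = (∏ c ∈ w.cycleFactorsFinset, ((1:K) - t ^ c.support.card)) *
        ((1:K) - t) ^ (n - w.support.card) := by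
  have hmat : (1 : Matrix (Fin n) (Fin n) K) - t • permM n w = PM t w (fun _ => false) := by
    ext i j
    simp only [Matrix.sub_apply, Matrix.smul_apply, Matrix.one_apply, permM, PM,
      Matrix.of_apply, smul_eq_mul, sg]
    norm_num
  rw [hmat, det_PM_general]
  congr 1
  · apply Finset.prod_congr rfl
    intro c _
    simp [sg]
  · calc ∏ i ∈ Finset.univ \ w.support, ((1:K) - sg false * t)
        = ∏ _i ∈ Finset.univ \ w.support, ((1:K) - t) := by
          apply Finset.prod_congr rfl; intro i _; simp [sg]
      _ = ((1:K) - t) ^ (n - w.support.card) := by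
          rw [Finset.prod_const, Finset.card_sdiff_of_subset (Finset.subset_univ _), Finset.card_univ,
            Fintype.card_fin]

lemma part_b (n : ℕ) (w : Equiv.Perm (Fin n)) :
    cq n w =
      Matrix.det ((1 : Matrix (Fin n) (Fin n) K) - (RatFunc.X : K) • permM n w) /
        Matrix.det ((1 : Matrix (Fin n) (Fin n) K)
          - ((RatFunc.X : K) ^ 2) • permM n w) := by
  have hsq : ∀ a : ℕ, (1:K) - ((RatFunc.X : K)^2)^a
      = (1 - (RatFunc.X : K)^a) * (1 + (RatFunc.X : K)^a) := by
    intro a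
    rw [show ((RatFunc.X : K)^2)^a = ((RatFunc.X : K)^a)^2 by
      rw [← pow_mul, ← pow_mul, Nat.mul_comm]]
    ring
  have hcyc1 : ∀ c ∈ w.cycleFactorsFinset, 1 ≤ c.support.card := by
    intro c hc
    have := ((Equiv.Perm.mem_cycleFactorsFinset_iff.mp hc).1).two_le_card_support
    omega
  have hN := det_one_sub_smul_perm n (RatFunc.X : K) w
  have hD := det_one_sub_smul_perm n ((RatFunc.X : K)^2) w
  set k := n - w.support.card with hk
  rw [hN, hD]
  have hDsplit : (∏ c ∈ w.cycleFactorsFinset, ((1:K) - ((RatFunc.X : K)^2) ^ c.support.card)) *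
      ((1:K) - (RatFunc.X : K)^2) ^ k
      = ((∏ c ∈ w.cycleFactorsFinset, ((1:K) - (RatFunc.X : K) ^ c.support.card)) *
        ((1:K) - (RatFunc.X : K)) ^ k) *
        ((∏ c ∈ w.cycleFactorsFinset, ((1:K) + (RatFunc.X : K) ^ c.support.card)) *
        ((1:K) + (RatFunc.X : K)) ^ k) := by
    rw [Finset.prod_congr rfl (fun c _ => hsq c.support.card), Finset.prod_mul_distrib]
    rw [show (1:K) - (RatFunc.X : K)^2 = (1 - (RatFunc.X : K)) * (1 + (RatFunc.X : K)) by ring]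
    rw [mul_pow]
    ring
  rw [hDsplit]
  have hNne : (∏ c ∈ w.cycleFactorsFinset, ((1:K) - (RatFunc.X : K) ^ c.support.card)) *
      ((1:K) - (RatFunc.X : K)) ^ k ≠ 0 := by
    apply mul_ne_zero
    · exact Finset.prod_ne_zero_iff.mpr (fun c hc => one_sub_X_pow_ne _ (hcyc1 c hc))
    · exact pow_ne_zero _ (by simpa using one_sub_X_pow_ne 1 le_rfl)
  rw [div_mul_eq_div_div, div_self hNne, one_div]
  rw [cq_eq, hk]
  rw [Finset.prod_inv_distrib, inv_pow, ← mul_inv]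

-- ============ part (a) infrastructure ============

lemma sg_pm_one (n : ℕ) (ε : Fin n → Bool) (S : Finset (Fin n)) :
    (∏ i ∈ S, (sg (ε i) : K)) = 1 ∨ (∏ i ∈ S, (sg (ε i) : K)) = -1 := by
  refine Finset.prod_induction _ (fun x => x = 1 ∨ x = -1) ?_ (Or.inl rfl) ?_
  · rintro a b (ha|ha) (hb|hb) <;> rw [ha, hb] <;> norm_num
  · intro i _; cases h : ε i <;> simp [sg]

lemma frac_eq (e : K) (he : e = 1 ∨ e = -1) (a : ℕ) :
    (1 - e) / (1 - e * (RatFunc.X : K) ^ a) = ((1:K) + (RatFunc.X : K) ^ a)⁻¹ * (1 - e) := by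
  rcases he with h|h <;> subst h
  · simp
  · rw [show (1 : K) - (-1) = 2 by ring,
      show (1:K) - (-1) * (RatFunc.X : K) ^ a = 1 + (RatFunc.X : K)^a by ring]
    rw [div_eq_mul_inv, mul_comm]

lemma sum_sg_zero (n : ℕ) (V : Finset (Fin n)) (hV : V.Nonempty) :
    ∑ ε : Fin n → Bool, ∏ i ∈ V, (sg (ε i) : K) = 0 := by
  have h1 : ∀ ε : Fin n → Bool, ∏ i ∈ V, (sg (ε i) : K)
      = ∏ i : Fin n, (if i ∈ V then (sg (ε i) : K) else 1) := by
    intro ε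
    conv_lhs => rw [← Finset.filter_univ_mem V]
    rw [Finset.prod_filter]
  rw [Finset.sum_congr rfl (fun ε _ => h1 ε)]
  have h2 : ∑ ε : Fin n → Bool, ∏ i : Fin n, (if i ∈ V then (sg (ε i) : K) else 1)
      = ∏ i : Fin n, ∑ b : Bool, (if i ∈ V then (sg b : K) else 1) := by
    rw [Finset.prod_univ_sum]
    rw [Fintype.piFinset_univ]
  rw [h2]
  obtain ⟨i₀, hi₀⟩ := hV
  apply Finset.prod_eq_zero (Finset.mem_univ i₀)
  have hb : ∀ b : Bool, (if i₀ ∈ V then (sg b : K) else 1) = sg b := fun b => if_pos hi₀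
  rw [Finset.sum_congr rfl (fun b _ => hb b), Fintype.sum_bool]
  simp [sg]

lemma sum_blocks (n : ℕ) (B : Finset (Finset (Fin n)))
    (hne : ∀ b ∈ B, b.Nonempty)
    (hdisj : (B : Set (Finset (Fin n))).PairwiseDisjoint id) :
    ∑ ε : Fin n → Bool, ∏ b ∈ B, ((1:K) - ∏ i ∈ b, (sg (ε i) : K)) = 2^n := by
  have hexp : ∀ ε : Fin n → Bool, ∏ b ∈ B, ((1:K) - ∏ i ∈ b, (sg (ε i) : K))
      = ∑ T ∈ B.powerset, (-1:K)^T.card * ∏ i ∈ T.biUnion id, (sg (ε i) : K) := by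
    intro ε
    calc ∏ b ∈ B, ((1:K) - ∏ i ∈ b, (sg (ε i) : K))
        = ∏ b ∈ B, ((- ∏ i ∈ b, (sg (ε i) : K)) + 1) := by
          apply Finset.prod_congr rfl; intro b _; ring
      _ = ∑ T ∈ B.powerset, (∏ b ∈ T, (- ∏ i ∈ b, (sg (ε i) : K))) * ∏ _b ∈ B \ T, (1:K) :=
          Finset.prod_add _ _ _
      _ = _ := by
          apply Finset.sum_congr rfl
          intro T hT
          rw [Finset.prod_const_one, mul_one]
          have hTB : (T : Set (Finset (Fin n))).PairwiseDisjoint id :=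
            hdisj.subset (by exact_mod_cast Finset.mem_powerset.mp hT)
          rw [show ∏ b ∈ T, (- ∏ i ∈ b, (sg (ε i) : K))
              = (-1:K)^T.card * ∏ b ∈ T, ∏ i ∈ b, (sg (ε i) : K) by
            rw [← Finset.prod_const, ← Finset.prod_mul_distrib]
            apply Finset.prod_congr rfl; intro b _; ring]
          rw [Finset.prod_biUnion hTB]
          rfl
  rw [Finset.sum_congr rfl (fun ε _ => hexp ε), Finset.sum_comm]
  rw [Finset.sum_eq_single_of_mem ∅ (Finset.empty_mem_powerset B)]
  · simp [Fintype.card_fun]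
  · intro T hT hTne
    have hTB : T ⊆ B := Finset.mem_powerset.mp hT
    obtain ⟨b, hb⟩ := Finset.nonempty_iff_ne_empty.mpr hTne
    obtain ⟨i, hi⟩ := hne b (hTB hb)
    have hV : (T.biUnion id).Nonempty := ⟨i, Finset.mem_biUnion.mpr ⟨b, hb, hi⟩⟩
    rw [← Finset.mul_sum, sum_sg_zero n _ hV, mul_zero]

lemma one_sub_bmat (n : ℕ) (w : Equiv.Perm (Fin n)) (ε : Fin n → Bool) :
    (1 : Matrix (Fin n) (Fin n) K) - BMat n (w, ε) = PM (1:K) w ε := by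
  ext i j
  simp only [Matrix.sub_apply, Matrix.one_apply, BMat, PM, Matrix.of_apply, sg, one_mul]

lemma one_sub_smul_bmat (n : ℕ) (t : K) (w : Equiv.Perm (Fin n)) (ε : Fin n → Bool) :
    (1 : Matrix (Fin n) (Fin n) K) - t • BMat n (w, ε) = PM t w ε := by
  ext i j
  simp only [Matrix.sub_apply, Matrix.one_apply, Matrix.smul_apply, BMat, PM, Matrix.of_apply,
    sg, smul_eq_mul]

lemma sum_eps (n : ℕ) (w : Equiv.Perm (Fin n)) :
    ∑ ε : Fin n → Bool,
      Matrix.det ((1 : Matrix (Fin n) (Fin n) K) - BMat n (w, ε)) /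
      Matrix.det ((1 : Matrix (Fin n) (Fin n) K) - (RatFunc.X : K) • BMat n (w, ε))
    = 2^n * cq n w := by
  have hNum : ∀ ε : Fin n → Bool,
      Matrix.det ((1 : Matrix (Fin n) (Fin n) K) - BMat n (w, ε))
      = (∏ c ∈ w.cycleFactorsFinset, ((1:K) - ∏ i ∈ c.support, (sg (ε i) : K))) *
        ∏ i ∈ Finset.univ \ w.support, ((1:K) - sg (ε i)) := by
    intro ε
    rw [one_sub_bmat, det_PM_general]
    congr 1
    · apply Finset.prod_congr rfl; intro c _; rw [one_pow, mul_one]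
    · apply Finset.prod_congr rfl; intro i _; rw [mul_one]
  have hDen : ∀ ε : Fin n → Bool,
      Matrix.det ((1 : Matrix (Fin n) (Fin n) K) - (RatFunc.X : K) • BMat n (w, ε))
      = (∏ c ∈ w.cycleFactorsFinset,
          ((1:K) - (∏ i ∈ c.support, (sg (ε i) : K)) * (RatFunc.X : K) ^ c.support.card)) *
        ∏ i ∈ Finset.univ \ w.support, ((1:K) - sg (ε i) * (RatFunc.X : K)) := by
    intro ε
    rw [one_sub_smul_bmat, det_PM_general]
  have hkF : (Finset.univ \ w.support).card = n - w.support.card := by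
    rw [Finset.card_sdiff_of_subset (Finset.subset_univ _), Finset.card_univ, Fintype.card_fin]
  have hRatio : ∀ ε : Fin n → Bool,
      Matrix.det ((1 : Matrix (Fin n) (Fin n) K) - BMat n (w, ε)) /
      Matrix.det ((1 : Matrix (Fin n) (Fin n) K) - (RatFunc.X : K) • BMat n (w, ε))
      = cq n w * ((∏ c ∈ w.cycleFactorsFinset, ((1:K) - ∏ i ∈ c.support, (sg (ε i) : K))) *
        ∏ i ∈ Finset.univ \ w.support, ((1:K) - sg (ε i))) := by
    intro ε
    rw [hNum ε, hDen ε]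
    rw [(div_mul_div_comm
      (∏ c ∈ w.cycleFactorsFinset, ((1:K) - ∏ i ∈ c.support, (sg (ε i) : K)))
      (∏ c ∈ w.cycleFactorsFinset,
        ((1:K) - (∏ i ∈ c.support, (sg (ε i) : K)) * (RatFunc.X : K) ^ c.support.card))
      (∏ i ∈ Finset.univ \ w.support, ((1:K) - sg (ε i)))
      (∏ i ∈ Finset.univ \ w.support, ((1:K) - sg (ε i) * (RatFunc.X : K)))).symm]
    rw [← Finset.prod_div_distrib, ← Finset.prod_div_distrib]
    have hc : ∀ c ∈ w.cycleFactorsFinset,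
        ((1:K) - ∏ i ∈ c.support, (sg (ε i) : K)) /
          ((1:K) - (∏ i ∈ c.support, (sg (ε i) : K)) * (RatFunc.X : K) ^ c.support.card)
        = ((1:K) + (RatFunc.X : K) ^ c.support.card)⁻¹ *
          ((1:K) - ∏ i ∈ c.support, (sg (ε i) : K)) :=
      fun c _ => frac_eq _ (sg_pm_one n ε c.support) _
    have hf : ∀ i ∈ Finset.univ \ w.support,
        ((1:K) - sg (ε i)) / ((1:K) - sg (ε i) * (RatFunc.X : K))
        = ((1:K) + (RatFunc.X : K))⁻¹ * ((1:K) - sg (ε i)) := by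
      intro i _
      have := frac_eq (sg (ε i)) (by cases h : ε i <;> simp [sg]) 1
      simpa [pow_one] using this
    rw [Finset.prod_congr rfl hc, Finset.prod_congr rfl hf,
      Finset.prod_mul_distrib, Finset.prod_mul_distrib, Finset.prod_const, hkF]
    rw [cq_eq]
    ring
  rw [Finset.sum_congr rfl (fun ε _ => hRatio ε), ← Finset.mul_sum]
  -- now : cq n w * ∑ ε, Num ε = 2^n * cq n w
  -- Blocks
  set Blocks : Finset (Finset (Fin n)) :=
    (w.cycleFactorsFinset.image Equiv.Perm.support) ∪
      (Finset.univ \ w.support).image (fun i => ({i} : Finset (Fin n))) with hBdef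
  have hcyc : ∀ c ∈ w.cycleFactorsFinset, c.IsCycle :=
    fun c hc => (Equiv.Perm.mem_cycleFactorsFinset_iff.mp hc).1
  have hsupsub : ∀ c ∈ w.cycleFactorsFinset, c.support ⊆ w.support := by
    intro c hc a ha
    have h1 := (Equiv.Perm.mem_cycleFactorsFinset_iff.mp hc).2 a ha
    have h2 : c a ≠ a := Equiv.Perm.mem_support.mp ha
    exact Equiv.Perm.mem_support.mpr (h1 ▸ h2)
  have hdisjsupp : ∀ c ∈ w.cycleFactorsFinset, ∀ c' ∈ w.cycleFactorsFinset, c ≠ c' →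
      Disjoint c.support c'.support := by
    intro c hc c' hc' hne
    exact Equiv.Perm.Disjoint.disjoint_support
      (Equiv.Perm.cycleFactorsFinset_pairwise_disjoint w hc hc' hne)
  have hinj1 : ∀ c ∈ w.cycleFactorsFinset, ∀ c' ∈ w.cycleFactorsFinset,
      c.support = c'.support → c = c' := by
    intro c hc c' hc' heq
    by_contra hne
    have hd := hdisjsupp c hc c' hc' hne
    rw [heq, disjoint_self] at hd
    have h2 := (hcyc c' hc').two_le_card_support
    rw [hd] at h2
    simp at h2
  have hdisjimg : Disjoint (w.cycleFactorsFinset.image Equiv.Perm.support)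
      ((Finset.univ \ w.support).image (fun i => ({i} : Finset (Fin n)))) := by
    rw [Finset.disjoint_left]
    intro b hb1 hb2
    obtain ⟨c, hc, rfl⟩ := Finset.mem_image.mp hb1
    obtain ⟨i, _, hi2⟩ := Finset.mem_image.mp hb2
    have h2 := (hcyc c hc).two_le_card_support
    rw [← hi2, Finset.card_singleton] at h2
    omega
  have hprodBlocks : ∀ f : Finset (Fin n) → K,
      ∏ b ∈ Blocks, f b = (∏ c ∈ w.cycleFactorsFinset, f c.support) *
        ∏ i ∈ Finset.univ \ w.support, f {i} := by
    intro f
    rw [hBdef, Finset.prod_union hdisjimg, Finset.prod_image hinj1,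
      Finset.prod_image (fun i _ j _ h => Finset.singleton_injective h)]
  have hneB : ∀ b ∈ Blocks, b.Nonempty := by
    intro b hb
    rw [hBdef, Finset.mem_union] at hb
    rcases hb with hb | hb
    · obtain ⟨c, hc, rfl⟩ := Finset.mem_image.mp hb
      exact Finset.card_pos.mp (by have := (hcyc c hc).two_le_card_support; omega)
    · obtain ⟨i, _, rfl⟩ := Finset.mem_image.mp hb
      exact Finset.singleton_nonempty i
  have hpair : ((Blocks : Finset (Finset (Fin n))) : Set (Finset (Fin n))).PairwiseDisjoint id := by
    intro b hb b' hb' hne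
    rw [Finset.mem_coe, hBdef, Finset.mem_union] at hb hb'
    have hss : ∀ x, x ∈ (Finset.univ \ w.support) → ∀ c ∈ w.cycleFactorsFinset,
        Disjoint ({x} : Finset (Fin n)) c.support := by
      intro x hx c hc
      rw [Finset.disjoint_singleton_left]
      intro hmem
      rw [Finset.mem_sdiff] at hx
      exact hx.2 (hsupsub c hc hmem)
    rcases hb with hb | hb <;> rcases hb' with hb' | hb'
    · obtain ⟨c, hc, rfl⟩ := Finset.mem_image.mp hb
      obtain ⟨c', hc', rfl⟩ := Finset.mem_image.mp hb'
      have hcc : c ≠ c' := fun h => hne (by rw [h])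
      exact hdisjsupp c hc c' hc' hcc
    · obtain ⟨c, hc, rfl⟩ := Finset.mem_image.mp hb
      obtain ⟨i, hi, rfl⟩ := Finset.mem_image.mp hb'
      exact (hss i hi c hc).symm
    · obtain ⟨i, hi, rfl⟩ := Finset.mem_image.mp hb
      obtain ⟨c, hc, rfl⟩ := Finset.mem_image.mp hb'
      exact hss i hi c hc
    · obtain ⟨i, hi, rfl⟩ := Finset.mem_image.mp hb
      obtain ⟨i', hi', rfl⟩ := Finset.mem_image.mp hb'
      have hii : i ≠ i' := fun h => hne (by rw [h])
      exact Finset.disjoint_singleton.mpr hii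
  have hNB : ∀ ε : Fin n → Bool,
      (∏ c ∈ w.cycleFactorsFinset, ((1:K) - ∏ i ∈ c.support, (sg (ε i) : K))) *
        ∏ i ∈ Finset.univ \ w.support, ((1:K) - sg (ε i))
      = ∏ b ∈ Blocks, ((1:K) - ∏ i ∈ b, (sg (ε i) : K)) := by
    intro ε
    rw [hprodBlocks (fun b => (1:K) - ∏ i ∈ b, (sg (ε i) : K))]
    congr 1
    apply Finset.prod_congr rfl
    intro i _
    rw [Finset.prod_singleton]
  rw [Finset.sum_congr rfl (fun ε _ => hNB ε)]
  rw [sum_blocks n Blocks hneB hpair]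
  ring


end S19

theorem statement19 (n : ℕ) (μ : YoungDiagram) (hcard : μ.card = n)
    (χ : Equiv.Perm (Fin n) → ℤ)
    (hχ : IsIrrCharOf n (↑μ.rowLens : Multiset ℕ) (↑μ.transpose.rowLens : Multiset ℕ) χ) :
    -- (a) the elliptic fake degree in W(B_n) equals (q-1)^n ⟨σ_λ, c_q⟩_{S_n}
    (((RatFunc.X : K) - 1) ^ n * ((Fintype.card (BElt n) : K))⁻¹ *
        ∑ p : BElt n, ((χ p.1 : ℤ) : K) *
          Matrix.det ((1 : Matrix (Fin n) (Fin n) K) - BMat n p) /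
          Matrix.det ((1 : Matrix (Fin n) (Fin n) K) - (RatFunc.X : K) • BMat n p)
      = ((RatFunc.X : K) - 1) ^ n * ((n.factorial : K))⁻¹ *
          ∑ w : Equiv.Perm (Fin n), ((χ w : ℤ) : K) * cq n w) ∧
    -- (b) c_q is the character of S_{q²}(E_n) ⊗ Λ_{-q}(E_n)
    (∀ w : Equiv.Perm (Fin n),
        cq n w =
          Matrix.det ((1 : Matrix (Fin n) (Fin n) K) - (RatFunc.X : K) • permM n w) /
            Matrix.det ((1 : Matrix (Fin n) (Fin n) K)
              - ((RatFunc.X : K) ^ 2) • permM n w)) := by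
  
  constructor
  · have hcard : (Fintype.card (BElt n) : K) = (n.factorial : K) * 2^n := by
      rw [Fintype.card_prod, Fintype.card_perm, Fintype.card_fun, Fintype.card_fin,
        Fintype.card_bool]
      push_cast
      ring
    rw [Fintype.sum_prod_type]
    have hinner : ∀ w : Equiv.Perm (Fin n),
        (∑ ε : Fin n → Bool, ((χ w : ℤ) : K) *
          Matrix.det ((1 : Matrix (Fin n) (Fin n) K) - BMat n (w, ε)) /
          Matrix.det ((1 : Matrix (Fin n) (Fin n) K) - (RatFunc.X : K) • BMat n (w, ε)))
        = ((χ w : ℤ) : K) * (2^n * cq n w) := by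
      intro w
      rw [Finset.sum_congr rfl (fun ε _ => mul_div_assoc _ _ _), ← Finset.mul_sum,
        S19.sum_eps n w]
    rw [Finset.sum_congr rfl (fun w _ => hinner w)]
    have h2n : ((2:K)^n) ≠ 0 := pow_ne_zero _ (by norm_num : (2:K) ≠ 0)
    have hfac : ((n.factorial : K)) ≠ 0 := Nat.cast_ne_zero.mpr (Nat.factorial_ne_zero n)
    have hS : ∑ w : Equiv.Perm (Fin n), ((χ w : ℤ) : K) * (2^n * cq n w)
        = 2^n * ∑ w : Equiv.Perm (Fin n), ((χ w : ℤ) : K) * cq n w := by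
      rw [Finset.mul_sum]
      apply Finset.sum_congr rfl
      intro w _
      ring
    rw [hS, hcard]
    rw [mul_inv]
    field_simp
  · intro w
    exact S19.part_b n w
end
end
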